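/- arXiv:2510.10510 — 6 statements merged into one kernel-verified Lean document; each statement's English description precedes it below -/
import Mathlib

section
/- Let f be a trade-off function (convex, continuous, non-increasing, f(α) ≤ 1-α) and define its left-continuous inverse f⁻¹(β) := inf{α ∈ [0,1] : f(α) ≤ β}. If f = T(P,Q) for distributions P and Q, then f⁻¹ = T(Q,P). -/
open MeasureTheory ProbabilityTheory Set Filter
open Topology

noncomputable def tradeoff {Ω : Type*} [MeasurableSpace Ω] (P Q : Measure Ω) (α : ℝ) : ℝ :=
  sInf { β | ∃ φ : Ω → ℝ, Measurable φ ∧ (∀ x, φ x ∈ Icc (0:ℝ) 1) ∧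
    (∫ x, φ x ∂P) ≤ α ∧ β = 1 - ∫ x, φ x ∂Q }

def IsTradeoffFn (f : ℝ → ℝ) : Prop :=
  ConvexOn ℝ (Icc 0 1) f ∧ ContinuousOn f (Icc 0 1) ∧ AntitoneOn f (Icc 0 1) ∧
    ∀ α ∈ Icc (0:ℝ) 1, f α ∈ Icc (0:ℝ) 1 ∧ f α ≤ 1 - α

noncomputable def tfInv (f : ℝ → ℝ) (β : ℝ) : ℝ := sInf {α | α ∈ Icc (0:ℝ) 1 ∧ f α ≤ β}

noncomputable def stdNormCDF (x : ℝ) : ℝ := (gaussianReal 0 1 (Iic x)).toReal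
noncomputable def stdNormCDFInv (p : ℝ) : ℝ := sInf {x : ℝ | p ≤ stdNormCDF x}
noncomputable def Gmu (μ α : ℝ) : ℝ := stdNormCDF (stdNormCDFInv (1 - α) - μ)

noncomputable def nu1 (f : ℝ → ℝ) : ℝ := -∫ x in (0:ℝ)..1, Real.log |deriv f x|
noncomputable def nu2 (f : ℝ → ℝ) : ℝ := ∫ x in (0:ℝ)..1, ((Real.log |deriv f x|) ^ 2)
noncomputable def nu3 (f : ℝ → ℝ) : ℝ := ∫ x in (0:ℝ)..1, ((abs (Real.log |deriv f x|)) ^ 3)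
noncomputable def nubar3 (f : ℝ → ℝ) : ℝ := ∫ x in (0:ℝ)..1, ((abs (Real.log |deriv f x| + nu1 f)) ^ 3)

section Aux

variable {Ω : Type*} [MeasurableSpace Ω]

lemma aux_integrable {μ : Measure Ω} [IsProbabilityMeasure μ] {φ : Ω → ℝ}
    (hm : Measurable φ) (hr : ∀ x, φ x ∈ Icc (0:ℝ) 1) : Integrable φ μ :=
  (integrable_const (1:ℝ)).mono' hm.aestronglyMeasurable
    (ae_of_all _ fun x => by
      rw [Real.norm_eq_abs, abs_of_nonneg (hr x).1]; exact (hr x).2)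

lemma aux_integral_mem {μ : Measure Ω} [IsProbabilityMeasure μ] {φ : Ω → ℝ}
    (hm : Measurable φ) (hr : ∀ x, φ x ∈ Icc (0:ℝ) 1) :
    (∫ x, φ x ∂μ) ∈ Icc (0:ℝ) 1 := by
  constructor
  · exact integral_nonneg fun x => (hr x).1
  · calc ∫ x, φ x ∂μ ≤ ∫ _, (1:ℝ) ∂μ :=
        integral_mono (aux_integrable hm hr) (integrable_const 1) fun x => (hr x).2
    _ = 1 := by simp

lemma tset_nonempty (P Q : Measure Ω) [IsProbabilityMeasure P] [IsProbabilityMeasure Q]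
    {α : ℝ} (hα : 0 ≤ α) :
    { β | ∃ φ : Ω → ℝ, Measurable φ ∧ (∀ x, φ x ∈ Icc (0:ℝ) 1) ∧
      (∫ x, φ x ∂P) ≤ α ∧ β = 1 - ∫ x, φ x ∂Q }.Nonempty :=
  ⟨1, fun _ => 0, measurable_const, fun _ => ⟨le_refl 0, zero_le_one⟩, by simpa using hα, by simp⟩

lemma tset_bddBelow (P Q : Measure Ω) [IsProbabilityMeasure P] [IsProbabilityMeasure Q]
    (α : ℝ) :
    BddBelow { β | ∃ φ : Ω → ℝ, Measurable φ ∧ (∀ x, φ x ∈ Icc (0:ℝ) 1) ∧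
      (∫ x, φ x ∂P) ≤ α ∧ β = 1 - ∫ x, φ x ∂Q } := by
  refine ⟨0, fun b hb => ?_⟩
  obtain ⟨φ, hm, hr, -, rfl⟩ := hb
  have := (aux_integral_mem (μ := Q) hm hr).2
  linarith

lemma tradeoff_le (P Q : Measure Ω) [IsProbabilityMeasure P] [IsProbabilityMeasure Q]
    {α : ℝ} {φ : Ω → ℝ} (hm : Measurable φ) (hr : ∀ x, φ x ∈ Icc (0:ℝ) 1)
    (hP : (∫ x, φ x ∂P) ≤ α) :
    tradeoff P Q α ≤ 1 - ∫ x, φ x ∂Q :=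
  csInf_le (tset_bddBelow P Q α) ⟨φ, hm, hr, hP, rfl⟩

lemma tradeoff_extract (P Q : Measure Ω) [IsProbabilityMeasure P] [IsProbabilityMeasure Q]
    {α c : ℝ} (hα : 0 ≤ α) (h : tradeoff P Q α < c) :
    ∃ φ : Ω → ℝ, Measurable φ ∧ (∀ x, φ x ∈ Icc (0:ℝ) 1) ∧
      (∫ x, φ x ∂P) ≤ α ∧ 1 - (∫ x, φ x ∂Q) < c := by
  obtain ⟨b, hb, hbc⟩ := exists_lt_of_csInf_lt (tset_nonempty P Q hα) h
  obtain ⟨φ, hm, hr, hP, rfl⟩ := hb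
  exact ⟨φ, hm, hr, hP, hbc⟩

lemma tradeoff_nonneg (P Q : Measure Ω) [IsProbabilityMeasure P] [IsProbabilityMeasure Q]
    {α : ℝ} (hα : 0 ≤ α) : 0 ≤ tradeoff P Q α :=
  le_csInf (tset_nonempty P Q hα) fun b hb => by
    obtain ⟨φ, hm, hr, -, rfl⟩ := hb
    have := (aux_integral_mem (μ := Q) hm hr).2
    linarith

end Aux
section Key

variable {Ω : Type*} [MeasurableSpace Ω]

lemma keyA (P Q : Measure Ω) [IsProbabilityMeasure P] [IsProbabilityMeasure Q]
    {α : ℝ} (hα0 : 0 ≤ α)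
    (hex : ∀ δ > (0:ℝ), ∃ φ : Ω → ℝ, Measurable φ ∧ (∀ x, φ x ∈ Icc (0:ℝ) 1) ∧
      (∫ x, φ x ∂P) ≤ α ∧ 1 - (∫ x, φ x ∂Q) < δ) :
    1 - ((P.singularPart Q) Set.univ).toReal ≤ α := by
  set h : Ω → ℝ := fun x => (P.rnDeriv Q x).toReal with hh
  have hmeas : Measurable h := (Measure.measurable_rnDeriv P Q).ennreal_toReal
  have hnn : ∀ x, 0 ≤ h x := fun x => ENNReal.toReal_nonneg
  have hint : Integrable h Q := Measure.integrable_toReal_rnDeriv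
  have hval : ∫ x, h x ∂Q = 1 - ((P.singularPart Q) Set.univ).toReal := by
    rw [hh]
    rw [Measure.integral_toReal_rnDeriv']
    simp; rfl
  have htail : Tendsto (fun k : ℕ => ∫ x, (h x - min (h x) k) ∂Q) atTop
      (𝓝 (∫ _x, (0:ℝ) ∂Q)) := by
    refine tendsto_integral_of_dominated_convergence h
      (fun k => (hmeas.sub (hmeas.min measurable_const)).aestronglyMeasurable)
      hint (fun k => ae_of_all _ fun x => ?_) (ae_of_all _ fun x => ?_)
    · have h1 : min (h x) (k:ℝ) ≤ h x := min_le_left _ _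
      have h2 : (0:ℝ) ≤ min (h x) (k:ℝ) := le_min (hnn x) (by positivity)
      rw [Real.norm_eq_abs, abs_of_nonneg (by linarith)]
      linarith
    · obtain ⟨N, hN⟩ := exists_nat_ge (h x)
      refine tendsto_const_nhds.congr' ?_
      filter_upwards [eventually_ge_atTop N] with k hk
      have : h x ≤ (k:ℝ) := hN.trans (by exact_mod_cast hk)
      simp [min_eq_left this]
  rw [integral_zero] at htail
  suffices hle : ∫ x, h x ∂Q ≤ α by linarith
  refine le_of_forall_pos_le_add fun ε hε => ?_
  obtain ⟨k, hk⟩ := (htail.eventually_lt_const (show (0:ℝ) < ε/2 by linarith)).exists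
  obtain ⟨φ, hm, hr, hP, hQclose⟩ := hex (ε/(2*(k+1))) (by positivity)
  have hintφ : Integrable φ Q := aux_integrable hm hr
  have hintφP : Integrable φ P := aux_integrable hm hr
  have hbd : ∃ C : ℝ, ∀ x, ‖φ x‖ ≤ C := ⟨1, fun x => by
    rw [Real.norm_eq_abs, abs_of_nonneg (hr x).1]; exact (hr x).2⟩
  have hintφh : Integrable (fun x => φ x * h x) Q :=
    hint.bdd_mul hm.aestronglyMeasurable (ae_of_all _ hbd.choose_spec)
  have hintmin : Integrable (fun x => min (h x) (k:ℝ)) Q :=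
    hint.mono' (hmeas.min measurable_const).aestronglyMeasurable
      (ae_of_all _ fun x => by
        rw [Real.norm_eq_abs, abs_of_nonneg (le_min (hnn x) (by positivity))]
        exact min_le_left _ _)
  -- split: h = φ*h + (1-φ)*h ≤ φ*h + (1-φ)*min(h,k) + (h - min(h,k))
  have hsplit : ∀ x, h x ≤ φ x * h x + (1 - φ x) * min (h x) (k:ℝ) + (h x - min (h x) (k:ℝ)) := by
    intro x
    have h1 : min (h x) (k:ℝ) ≤ h x := min_le_left _ _
    have h3 := mul_nonneg (hr x).1 (sub_nonneg.mpr h1)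
    nlinarith [h3]
  have step1 : ∫ x, h x ∂Q ≤ (∫ x, φ x * h x ∂Q) + (∫ x, (1 - φ x) * min (h x) (k:ℝ) ∂Q)
      + (∫ x, (h x - min (h x) (k:ℝ)) ∂Q) := by
    have hi2 : Integrable (fun x => (1 - φ x) * min (h x) (k:ℝ)) Q :=
      hintmin.bdd_mul (c := 1) ((aestronglyMeasurable_const.sub hm.aestronglyMeasurable))
        (ae_of_all _ fun x => by
          rw [Real.norm_eq_abs, abs_of_nonneg (by linarith [(hr x).2])]
          linarith [(hr x).1])
    have hi3 : Integrable (fun x => h x - min (h x) (k:ℝ)) Q := hint.sub hintmin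
    have hi12 : Integrable (fun x => φ x * h x + (1 - φ x) * min (h x) (k:ℝ)) Q := hintφh.add hi2
    calc ∫ x, h x ∂Q
        ≤ ∫ x, (φ x * h x + (1 - φ x) * min (h x) (k:ℝ) + (h x - min (h x) (k:ℝ))) ∂Q :=
          integral_mono hint (hi12.add hi3) hsplit
      _ = _ := by rw [integral_add hi12 hi3, integral_add hintφh hi2]
  -- term 1 : ≤ ∫ φ dP ≤ α
  have hterm1 : ∫ x, φ x * h x ∂Q ≤ α := by
    have hac : (Q.withDensity (P.rnDeriv Q)) ≪ Q := withDensity_absolutelyContinuous _ _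
    have hrnd : (Q.withDensity (P.rnDeriv Q)).rnDeriv Q =ᵐ[Q] P.rnDeriv Q :=
      Measure.rnDeriv_withDensity Q (Measure.measurable_rnDeriv P Q)
    have hEq : ∫ x, φ x * h x ∂Q
        = ∫ x, φ x ∂(Q.withDensity (P.rnDeriv Q)) := by
      rw [← integral_rnDeriv_smul hac]
      refine integral_congr_ae ?_
      filter_upwards [hrnd] with x hx
      simp [hh, hx, mul_comm]
    rw [hEq]
    refine le_trans (integral_mono_measure (Measure.withDensity_rnDeriv_le P Q)
      (ae_of_all _ fun x => (hr x).1) hintφP) hP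
  -- term 2 : ≤ k * (1 - ∫φ dQ) ≤ ε/2
  have hterm2 : ∫ x, (1 - φ x) * min (h x) (k:ℝ) ∂Q ≤ ε/2 := by
    have hi2 : Integrable (fun x => (1 - φ x) * min (h x) (k:ℝ)) Q :=
      hintmin.bdd_mul (c := 1) ((aestronglyMeasurable_const.sub hm.aestronglyMeasurable))
        (ae_of_all _ fun x => by
          rw [Real.norm_eq_abs, abs_of_nonneg (by linarith [(hr x).2])]
          linarith [(hr x).1])
    have hik : Integrable (fun x => (k:ℝ) * (1 - φ x)) Q :=
      ((integrable_const (1:ℝ)).sub hintφ).const_mul _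
    have hb : ∫ x, (1 - φ x) * min (h x) (k:ℝ) ∂Q ≤ ∫ x, (k:ℝ) * (1 - φ x) ∂Q := by
      refine integral_mono hi2 hik fun x => ?_
      have h2 : (0:ℝ) ≤ 1 - φ x := by linarith [(hr x).2]
      have h3 : min (h x) (k:ℝ) ≤ (k:ℝ) := min_le_right _ _
      have h4 : (0:ℝ) ≤ min (h x) (k:ℝ) := le_min (hnn x) (by positivity)
      nlinarith
    have hc : ∫ x, (k:ℝ) * (1 - φ x) ∂Q = (k:ℝ) * (1 - ∫ x, φ x ∂Q) := by
      rw [integral_const_mul, integral_sub (integrable_const 1) hintφ]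
      simp
    rw [hc] at hb
    have h5 : (1:ℝ) - ∫ x, φ x ∂Q ≤ ε/(2*(k+1)) := le_of_lt hQclose
    have h6 : (k:ℝ) * (1 - ∫ x, φ x ∂Q) ≤ (k:ℝ) * (ε/(2*(k+1))) := by
      have h0 : (0:ℝ) ≤ (k:ℝ) := by positivity
      exact mul_le_mul_of_nonneg_left h5 h0
    have h7 : (k:ℝ) * (ε/(2*((k:ℝ)+1))) ≤ ε/2 := by
      calc (k:ℝ) * (ε/(2*((k:ℝ)+1))) = ε * ((k:ℝ)/(2*((k:ℝ)+1))) := by ring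
        _ ≤ ε * (1/2) := by
            have hd : (k:ℝ)/(2*((k:ℝ)+1)) ≤ 1/2 := by
              rw [div_le_div_iff₀ (by positivity) (by norm_num)]
              linarith
            exact mul_le_mul_of_nonneg_left hd hε.le
        _ = ε/2 := by ring
    linarith
  have hterm3 : ∫ x, (h x - min (h x) (k:ℝ)) ∂Q ≤ ε/2 := le_of_lt hk
  linarith

end Key

/-- the left-continuous inverse of `T(P,Q)` is `T(Q,P)`. -/
theorem tfInv_tradeoff {Ω : Type*} [MeasurableSpace Ω] (P Q : Measure Ω)
    [IsProbabilityMeasure P] [IsProbabilityMeasure Q] (f : ℝ → ℝ)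
    (hf : IsTradeoffFn f)
    (hfeq : ∀ α ∈ Icc (0:ℝ) 1, f α = tradeoff P Q α) :
    ∀ β ∈ Icc (0:ℝ) 1, tfInv f β = tradeoff Q P β := by
  obtain ⟨-, -, -, hrange⟩ := hf
  intro β hβ
  obtain ⟨hβ0, hβ1⟩ := hβ
  have hUne : (1:ℝ) ∈ {α | α ∈ Icc (0:ℝ) 1 ∧ f α ≤ β} := by
    refine ⟨⟨zero_le_one, le_refl 1⟩, ?_⟩
    have := (hrange 1 ⟨zero_le_one, le_refl 1⟩).2
    linarith
  have hUbdd : BddBelow {α | α ∈ Icc (0:ℝ) 1 ∧ f α ≤ β} := ⟨0, fun a ha => ha.1.1⟩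
  apply le_antisymm
  · -- tfInv f β ≤ tradeoff Q P β
    rw [tradeoff]
    refine le_csInf (tset_nonempty Q P hβ0) fun b hb => ?_
    obtain ⟨ψ, hmψ, hrψ, hQψ, rfl⟩ := hb
    have hmem := aux_integral_mem (μ := P) hmψ hrψ
    have hIcc : (1 - ∫ x, ψ x ∂P) ∈ Icc (0:ℝ) 1 :=
      ⟨by linarith [hmem.2], by linarith [hmem.1]⟩
    rw [tfInv]
    refine csInf_le hUbdd ⟨hIcc, ?_⟩
    rw [hfeq _ hIcc]
    have hφ : Measurable (fun x => 1 - ψ x) := measurable_const.sub hmψ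
    have hφr : ∀ x, (1 - ψ x) ∈ Icc (0:ℝ) 1 := fun x =>
      ⟨by linarith [(hrψ x).2], by linarith [(hrψ x).1]⟩
    have hP1 : (∫ x, (1 - ψ x) ∂P) = 1 - ∫ x, ψ x ∂P := by
      rw [integral_sub (integrable_const 1) (aux_integrable hmψ hrψ)]; simp
    have hQ1 : (∫ x, (1 - ψ x) ∂Q) = 1 - ∫ x, ψ x ∂Q := by
      rw [integral_sub (integrable_const 1) (aux_integrable hmψ hrψ)]; simp
    have hle := tradeoff_le P Q (α := 1 - ∫ x, ψ x ∂P) hφ hφr (le_of_eq hP1)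
    rw [hQ1] at hle
    linarith
  · -- tradeoff Q P β ≤ tfInv f β
    rw [tfInv]
    refine le_csInf ⟨1, hUne⟩ fun a ha => ?_
    obtain ⟨⟨ha0, ha1⟩, hfa⟩ := ha
    rcases eq_or_lt_of_le hβ0 with hb0 | hb0
    · -- β = 0
      subst hb0
      have hex : ∀ δ > (0:ℝ), ∃ φ : Ω → ℝ, Measurable φ ∧ (∀ x, φ x ∈ Icc (0:ℝ) 1) ∧
          (∫ x, φ x ∂P) ≤ a ∧ 1 - (∫ x, φ x ∂Q) < δ := by
        intro δ hδ
        have hlt : tradeoff P Q a < δ := by rw [← hfeq a ⟨ha0, ha1⟩]; linarith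
        exact tradeoff_extract P Q ha0 hlt
      have hkey := keyA P Q ha0 hex
      have hms := Measure.mutuallySingular_singularPart P Q
      set s := hms.nullSet with hs
      have hsm : MeasurableSet s := hms.measurableSet_nullSet
      have hQs : Q sᶜ = 0 := hms.measure_compl_nullSet
      have hsps : (P.singularPart Q) s = 0 := hms.measure_nullSet
      set ψ : Ω → ℝ := sᶜ.indicator (fun _ => (1:ℝ)) with hψdef
      have hmψ : Measurable ψ := measurable_const.indicator hsm.compl
      have hrψ : ∀ x, ψ x ∈ Icc (0:ℝ) 1 := fun x => by
        by_cases hx : x ∈ sᶜ <;> simp [hψdef, hx]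
      have hIQ : ∫ x, ψ x ∂Q = 0 := by
        rw [hψdef, integral_indicator_const _ hsm.compl]; simp [Measure.real, hQs]
      have hIP : ∫ x, ψ x ∂P = (P sᶜ).toReal := by
        rw [hψdef, integral_indicator_const _ hsm.compl]; simp; rfl
      have hle := tradeoff_le Q P (α := 0) hmψ hrψ (le_of_eq hIQ)
      rw [hIP] at hle
      have hspc : (P.singularPart Q) Set.univ = (P.singularPart Q) sᶜ := by
        have hadd := measure_add_measure_compl (μ := P.singularPart Q) hsm
        rw [hsps, zero_add] at hadd
        exact hadd.symm
      have hPle : (P.singularPart Q) Set.univ ≤ P sᶜ := by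
        rw [hspc]
        exact Measure.le_iff'.mp (Measure.singularPart_le P Q) sᶜ
      have hPr : ((P.singularPart Q) Set.univ).toReal ≤ (P sᶜ).toReal :=
        ENNReal.toReal_le_toReal (measure_ne_top _ _) (measure_ne_top _ _) |>.mpr hPle
      linarith
    · -- β > 0
      refine le_of_forall_pos_le_add fun ε hε => ?_
      have hlt : tradeoff P Q a < β + ε * β := by
        rw [← hfeq a ⟨ha0, ha1⟩]
        nlinarith
      obtain ⟨φ, hm, hr, hP, hQc⟩ := tradeoff_extract P Q ha0 hlt
      set t : ℝ := β / (β + ε * β) with htdef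
      have hpos : (0:ℝ) < β + ε * β := by positivity
      have ht0 : 0 ≤ t := by positivity
      have ht1 : t ≤ 1 := by rw [htdef, div_le_one hpos]; nlinarith
      set ψ : Ω → ℝ := fun x => t * (1 - φ x) with hψdef
      have hmψ : Measurable ψ := (measurable_const.sub hm).const_mul t
      have hrψ : ∀ x, ψ x ∈ Icc (0:ℝ) 1 := fun x => by
        constructor
        · exact mul_nonneg ht0 (by linarith [(hr x).2])
        · have h1 : 1 - φ x ≤ 1 := by linarith [(hr x).1]
          have h2 : 0 ≤ 1 - φ x := by linarith [(hr x).2]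
          have : t * (1 - φ x) ≤ 1 := by nlinarith
          exact this
      have hintφQ := aux_integrable (μ := Q) hm hr
      have hintφP := aux_integrable (μ := P) hm hr
      have hψQ : ∫ x, ψ x ∂Q = t * (1 - ∫ x, φ x ∂Q) := by
        rw [hψdef]
        rw [integral_const_mul, integral_sub (integrable_const 1) hintφQ]
        simp
      have hψP : ∫ x, ψ x ∂P = t * (1 - ∫ x, φ x ∂P) := by
        rw [hψdef]
        rw [integral_const_mul, integral_sub (integrable_const 1) hintφP]
        simp
      have hQbound : ∫ x, ψ x ∂Q ≤ β := by
        rw [hψQ]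
        have h1 : 1 - ∫ x, φ x ∂Q ≤ β + ε * β := le_of_lt hQc
        calc t * (1 - ∫ x, φ x ∂Q) ≤ t * (β + ε * β) := mul_le_mul_of_nonneg_left h1 ht0
          _ = β := by rw [htdef]; field_simp
      have hle := tradeoff_le Q P hmψ hrψ hQbound
      rw [hψP] at hle
      have h1t : 1 - t ≤ ε := by
        have : 1 - ε ≤ t := by
          rw [htdef, le_div_iff₀ hpos]
          nlinarith [mul_nonneg (mul_nonneg hε.le hε.le) hβ0]
        linarith
      have hfin : 1 - t * (1 - ∫ x, φ x ∂P) ≤ a + ε := by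
        have hv1 : t * (∫ x, φ x ∂P) ≤ t * a := mul_le_mul_of_nonneg_left hP ht0
        have hv2 : 0 ≤ (1 - t) * a := mul_nonneg (by linarith) ha0
        nlinarith
      linarith
end

section
/- Monotonicity of composition: if g₁ and g₂ are trade-off functions with g₁ ≤ g₂ pointwise, then for any trade-off function f, f ⊗ g₁ ≤ f ⊗ g₂ pointwise. -/
open MeasureTheory ProbabilityTheory Set Filter

set_option linter.unusedSectionVars false
set_option maxHeartbeats 1000000

namespace TM
variable {Ω : Type*} [MeasurableSpace Ω] {P Q : Measure Ω}

variable {Ω : Type*} [MeasurableSpace Ω] {P Q : Measure Ω}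

def FeasSet (P Q : Measure Ω) (α : ℝ) : Set ℝ :=
  { β | ∃ φ : Ω → ℝ, Measurable φ ∧ (∀ x, φ x ∈ Icc (0:ℝ) 1) ∧
    (∫ x, φ x ∂P) ≤ α ∧ β = 1 - ∫ x, φ x ∂Q }

lemma tradeoff_eq (P Q : Measure Ω) (α : ℝ) : tradeoff P Q α = sInf (FeasSet P Q α) := rfl

lemma test_integrable [IsFiniteMeasure P] {φ : Ω → ℝ} (hm : Measurable φ)
    (hr : ∀ x, φ x ∈ Icc (0:ℝ) 1) : Integrable φ P := by
  refine Integrable.mono' (integrable_const 1) hm.aestronglyMeasurable ?_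
  refine ae_of_all _ fun x => ?_
  rw [Real.norm_eq_abs, abs_of_nonneg (hr x).1]
  exact (hr x).2

lemma test_integral_le [IsFiniteMeasure P] {φ : Ω → ℝ} (hm : Measurable φ)
    (hr : ∀ x, φ x ∈ Icc (0:ℝ) 1) : ∫ x, φ x ∂P ≤ (P univ).toReal := by
  calc ∫ x, φ x ∂P ≤ ∫ _x, (1:ℝ) ∂P :=
        integral_mono (test_integrable hm hr) (integrable_const 1) fun x => (hr x).2
    _ = (P univ).toReal := by simp; rfl

lemma test_integral_le_one [IsProbabilityMeasure P] {φ : Ω → ℝ} (hm : Measurable φ)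
    (hr : ∀ x, φ x ∈ Icc (0:ℝ) 1) : ∫ x, φ x ∂P ≤ 1 := by
  have := test_integral_le (P := P) hm hr
  simpa using this

lemma test_integral_nonneg {φ : Ω → ℝ} (hr : ∀ x, φ x ∈ Icc (0:ℝ) 1) :
    0 ≤ ∫ x, φ x ∂P :=
  integral_nonneg fun x => (hr x).1

lemma feas_nonempty [IsProbabilityMeasure P] [IsProbabilityMeasure Q] {α : ℝ} (hα : 0 ≤ α) :
    (FeasSet P Q α).Nonempty := by
  refine ⟨1 - ∫ x, (0:ℝ) ∂Q, fun _ => (0:ℝ), measurable_const, fun x => ?_, by simpa, rfl⟩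
  simp [mem_Icc]

lemma feas_bddBelow [IsProbabilityMeasure Q] {α : ℝ} : BddBelow (FeasSet P Q α) := by
  refine ⟨0, fun β hβ => ?_⟩
  obtain ⟨φ, hm, hr, _, rfl⟩ := hβ
  linarith [test_integral_le_one (P := Q) hm hr]

lemma tradeoff_le_of_test [IsProbabilityMeasure Q] {α : ℝ} {φ : Ω → ℝ} (hm : Measurable φ)
    (hr : ∀ x, φ x ∈ Icc (0:ℝ) 1) (hl : (∫ x, φ x ∂P) ≤ α) :
    tradeoff P Q α ≤ 1 - ∫ x, φ x ∂Q :=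
  csInf_le feas_bddBelow ⟨φ, hm, hr, hl, rfl⟩

lemma tradeoff_anti [IsProbabilityMeasure P] [IsProbabilityMeasure Q] {α α' : ℝ}
    (h0 : 0 ≤ α) (hle : α ≤ α') : tradeoff P Q α' ≤ tradeoff P Q α := by
  refine csInf_le_csInf feas_bddBelow (feas_nonempty h0) ?_
  rintro β ⟨φ, hm, hr, hl, rfl⟩
  exact ⟨φ, hm, hr, hl.trans hle, rfl⟩

lemma exists_near_test [IsProbabilityMeasure P] [IsProbabilityMeasure Q] {α ε : ℝ}
    (hα : 0 ≤ α) (hε : 0 < ε) :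
    ∃ φ : Ω → ℝ, Measurable φ ∧ (∀ x, φ x ∈ Icc (0:ℝ) 1) ∧
      (∫ x, φ x ∂P) ≤ α ∧ 1 - (∫ x, φ x ∂Q) ≤ tradeoff P Q α + ε := by
  have h := exists_lt_of_csInf_lt (feas_nonempty (P := P) (Q := Q) hα)
    (show sInf (FeasSet P Q α) < sInf (FeasSet P Q α) + ε by linarith)
  obtain ⟨β, ⟨φ, hm, hr, hl, rfl⟩, hβ⟩ := h
  exact ⟨φ, hm, hr, hl, hβ.le⟩

/-- Key measure-theoretic step: `T(0) ≤ T(b) + M b + ε` for a suitable `M`. -/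
lemma zero_cont [IsProbabilityMeasure P] [IsProbabilityMeasure Q] {ε : ℝ} (hε : 0 < ε) :
    ∃ M : ℝ, 0 < M ∧ ∀ b : ℝ, 0 ≤ b → b ≤ 1 →
      tradeoff P Q 0 ≤ tradeoff P Q b + M * b + ε := by
  classical
  set g : Ω → ℝ := fun x => (Q.rnDeriv P x).toReal with hg
  have hgmeas : Measurable g := (Measure.measurable_rnDeriv Q P).ennreal_toReal
  have hgint : Integrable g P := Measure.integrable_toReal_rnDeriv
  have hgnon : ∀ x, 0 ≤ g x := fun x => ENNReal.toReal_nonneg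
  have hint_min : ∀ n : ℕ, Integrable (fun x => min (g x) n) P := by
    intro n
    refine Integrable.mono' hgint (hgmeas.min measurable_const).aestronglyMeasurable ?_
    refine ae_of_all _ fun x => ?_
    rw [Real.norm_eq_abs, abs_of_nonneg (le_min (hgnon x) n.cast_nonneg)]
    exact min_le_left _ _
  have hint_res : ∀ n : ℕ, Integrable (fun x => g x - min (g x) n) P :=
    fun n => hgint.sub (hint_min n)
  have hrtend : Tendsto (fun n : ℕ => ∫ x, (g x - min (g x) n) ∂P) atTop (nhds 0) := by
    have h0 : (0:ℝ) = ∫ x, (0:ℝ) ∂P := by simp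
    rw [h0]
    refine tendsto_integral_of_dominated_convergence g
      (fun n => (hint_res n).aestronglyMeasurable) hgint ?_ ?_
    · intro n
      refine ae_of_all _ fun x => ?_
      rw [Real.norm_eq_abs, abs_of_nonneg (by simp [min_le_left])]
      have : 0 ≤ min (g x) n := le_min (hgnon x) n.cast_nonneg
      linarith
    · refine ae_of_all _ fun x => ?_
      refine tendsto_const_nhds.congr' ?_
      filter_upwards [eventually_ge_atTop ⌈g x⌉₊] with n hn
      have : g x ≤ (n:ℝ) := le_trans (Nat.le_ceil _) (by exact_mod_cast hn)
      simp [min_eq_left this]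
  obtain ⟨N, hN⟩ : ∃ N : ℕ, ∫ x, (g x - min (g x) N) ∂P ≤ ε / 2 := by
    have := (hrtend.eventually (eventually_le_nhds (show (0:ℝ) < ε/2 by linarith))).exists
    simpa using this
  refine ⟨(N:ℝ) + 1, by positivity, fun b hb0 hb1 => ?_⟩
  -- singular part set
  have hsing : Q.singularPart P ⟂ₘ P := Measure.mutuallySingular_singularPart Q P
  set S : Set Ω := hsing.nullSet with hS
  have hSmeas : MeasurableSet S := hsing.measurableSet_nullSet
  have hνS : Q.singularPart P S = 0 := hsing.measure_nullSet
  have hPSc : P Sᶜ = 0 := hsing.measure_compl_nullSet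
  -- Step A : T(0) ≤ 1 - (Q Sᶜ).toReal
  have stepA : tradeoff P Q 0 ≤ 1 - (Q Sᶜ).toReal := by
    have hm : Measurable (Sᶜ.indicator (fun _ => (1:ℝ))) :=
      measurable_const.indicator hSmeas.compl
    have hrr : ∀ x, Sᶜ.indicator (fun _ => (1:ℝ)) x ∈ Icc (0:ℝ) 1 := by
      intro x; by_cases hx : x ∈ Sᶜ <;> simp [indicator_apply, hx]
    have hl : ∫ x, Sᶜ.indicator (fun _ => (1:ℝ)) x ∂P ≤ 0 := by
      rw [integral_indicator_const _ hSmeas.compl, show P.real Sᶜ = 0 by simp [Measure.real, hPSc]]; simp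
    have h := tradeoff_le_of_test (P := P) (Q := Q) hm hrr hl
    rw [integral_indicator_const _ hSmeas.compl] at h
    exact (by simpa using h : tradeoff P Q 0 ≤ 1 - Q.real Sᶜ)
  -- Step B : (Q.singularPart P univ).toReal ≤ (Q Sᶜ).toReal
  have stepB : (Q.singularPart P univ).toReal ≤ (Q Sᶜ).toReal := by
    have h1 : Q.singularPart P univ ≤ Q.singularPart P Sᶜ := by
      have h2 : Q.singularPart P univ ≤ Q.singularPart P S + Q.singularPart P Sᶜ := by
        rw [← union_compl_self S]
        exact measure_union_le _ _
      simpa [hνS] using h2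
    have h2 : Q.singularPart P Sᶜ ≤ Q Sᶜ := Measure.singularPart_le Q P Sᶜ
    exact ENNReal.toReal_mono (measure_ne_top Q _) (h1.trans h2)
  -- Step C : for every test at level b
  have stepC : ∀ φ : Ω → ℝ, Measurable φ → (∀ x, φ x ∈ Icc (0:ℝ) 1) →
      (∫ x, φ x ∂P) ≤ b →
      ∫ x, φ x ∂Q ≤ (Q.singularPart P univ).toReal + (((N:ℝ)+1) * b + ε / 2) := by
    intro φ hm hrφ hl
    haveI : IsFiniteMeasure (P.withDensity (Q.rnDeriv P)) :=
      isFiniteMeasure_of_le Q (Measure.withDensity_rnDeriv_le Q P)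
    have hdecomp : Q.singularPart P + P.withDensity (Q.rnDeriv P) = Q :=
      Measure.singularPart_add_rnDeriv Q P
    have hsplit : ∫ x, φ x ∂Q
        = ∫ x, φ x ∂(Q.singularPart P) + ∫ x, φ x ∂(P.withDensity (Q.rnDeriv P)) := by
      have h := integral_add_measure (μ := Q.singularPart P)
        (ν := P.withDensity (Q.rnDeriv P)) (f := φ)
        (test_integrable hm hrφ) (test_integrable hm hrφ)
      rw [hdecomp] at h
      exact h
    have hν_le : ∫ x, φ x ∂(Q.singularPart P) ≤ (Q.singularPart P univ).toReal :=
      test_integral_le hm hrφ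
    have hwd_eq : ∫ x, φ x ∂(P.withDensity (Q.rnDeriv P)) = ∫ x, g x * φ x ∂P := by
      have hac : P.withDensity (Q.rnDeriv P) ≪ P := withDensity_absolutelyContinuous _ _
      have h1 : ∫ x, ((P.withDensity (Q.rnDeriv P)).rnDeriv P x).toReal • φ x ∂P
          = ∫ x, φ x ∂(P.withDensity (Q.rnDeriv P)) :=
        integral_rnDeriv_smul hac
      rw [← h1]
      refine integral_congr_ae ?_
      filter_upwards [Measure.rnDeriv_withDensity P (Measure.measurable_rnDeriv Q P)]
        with x hx
      simp [hx, hg, smul_eq_mul]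
    have hpt : ∀ x, g x * φ x ≤ ((N:ℝ)+1) * φ x + (g x - min (g x) N) := by
      intro x
      have h0 := (hrφ x).1
      have h1 := (hrφ x).2
      rcases le_total (g x) (N:ℝ) with hc | hc
      · rw [min_eq_left hc]
        nlinarith [mul_le_mul_of_nonneg_right hc h0]
      · rw [min_eq_right hc]
        nlinarith [mul_le_mul_of_nonneg_left h1 (sub_nonneg.mpr hc)]
    have hInt1 : Integrable (fun x => g x * φ x) P := by
      refine Integrable.mono' hgint (hgmeas.mul hm).aestronglyMeasurable ?_
      refine ae_of_all _ fun x => ?_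
      rw [Real.norm_eq_abs, abs_of_nonneg (mul_nonneg (hgnon x) (hrφ x).1)]
      nlinarith [hgnon x, (hrφ x).1, (hrφ x).2]
    have hInt2 : Integrable (fun x => ((N:ℝ)+1) * φ x + (g x - min (g x) N)) P :=
      ((test_integrable hm hrφ).const_mul _).add (hint_res N)
    have hmono : ∫ x, g x * φ x ∂P
        ≤ ∫ x, (((N:ℝ)+1) * φ x + (g x - min (g x) N)) ∂P :=
      integral_mono hInt1 hInt2 hpt
    have hsum : ∫ x, (((N:ℝ)+1) * φ x + (g x - min (g x) N)) ∂P
        = ((N:ℝ)+1) * (∫ x, φ x ∂P) + ∫ x, (g x - min (g x) N) ∂P := by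
      rw [integral_add ((test_integrable hm hrφ).const_mul _) (hint_res N),
        integral_const_mul]
    have hMb : ((N:ℝ)+1) * (∫ x, φ x ∂P) ≤ ((N:ℝ)+1) * b :=
      mul_le_mul_of_nonneg_left hl (by positivity)
    have hfinal : ∫ x, g x * φ x ∂P ≤ ((N:ℝ)+1) * b + ε / 2 := by
      rw [hsum] at hmono
      linarith
    linarith [hsplit, hν_le, hwd_eq, hfinal]
  -- conclude using a near optimal test at level b
  obtain ⟨φ, hm, hrφ, hl, hnear⟩ := exists_near_test (P := P) (Q := Q) hb0 (half_pos hε)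
  have hC := stepC φ hm hrφ hl
  calc tradeoff P Q 0 ≤ 1 - (Q Sᶜ).toReal := stepA
    _ ≤ 1 - (Q.singularPart P univ).toReal := by linarith
    _ ≤ 1 - (∫ x, φ x ∂Q) + ((N:ℝ)+1) * b + ε / 2 := by linarith
    _ ≤ tradeoff P Q b + ((N:ℝ)+1) * b + ε := by linarith


variable {Ω : Type*} [MeasurableSpace Ω] {P Q : Measure Ω}

/-- Uniform one-sided continuity of the trade-off function. -/
lemma unif_cont [IsProbabilityMeasure P] [IsProbabilityMeasure Q] {ε : ℝ} (hε : 0 < ε) :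
    ∃ δ : ℝ, 0 < δ ∧ ∀ a b : ℝ, 0 ≤ a → a ≤ b → b ≤ 1 → b - a ≤ δ →
      tradeoff P Q a ≤ tradeoff P Q b + ε := by
  obtain ⟨M, hM, hMc⟩ := zero_cont (P := P) (Q := Q) (show (0:ℝ) < ε/3 by linarith)
  set t : ℝ := ε / (3 * M) with ht
  have ht0 : 0 < t := by positivity
  refine ⟨t * ε / 3, by positivity, fun a b ha0 hab hb1 hδ => ?_⟩
  have hb0 : 0 ≤ b := ha0.trans hab
  rcases le_total b t with hbt | hbt
  · -- small b : go through 0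
    have h1 : tradeoff P Q a ≤ tradeoff P Q 0 := tradeoff_anti le_rfl ha0
    have h2 := hMc b hb0 hb1
    have h3 : M * b ≤ M * t := mul_le_mul_of_nonneg_left hbt hM.le
    have h4 : M * t = ε / 3 := by
      rw [ht]; field_simp
    linarith
  · -- b ≥ t > 0 : scale a near optimal test at level b
    have hbpos : 0 < b := lt_of_lt_of_le ht0 hbt
    obtain ⟨φ, hm, hr, hl, hnear⟩ := exists_near_test (P := P) (Q := Q) hb0
      (show (0:ℝ) < ε/3 by linarith)
    have hfrac0 : 0 ≤ a / b := div_nonneg ha0 hb0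
    have hfrac1 : a / b ≤ 1 := div_le_one_of_le₀ hab hb0
    have hr' : ∀ x, (a / b) * φ x ∈ Icc (0:ℝ) 1 := by
      intro x
      constructor
      · exact mul_nonneg hfrac0 (hr x).1
      · calc (a / b) * φ x ≤ 1 * 1 :=
            mul_le_mul hfrac1 (hr x).2 (hr x).1 one_pos.le
          _ = 1 := one_mul 1
    have hm' : Measurable fun x => (a / b) * φ x := hm.const_mul _
    have hl' : (∫ x, (a / b) * φ x ∂P) ≤ a := by
      rw [integral_const_mul]
      calc (a / b) * ∫ x, φ x ∂P ≤ (a / b) * b := mul_le_mul_of_nonneg_left hl hfrac0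
        _ = a := by field_simp
    have hkey := tradeoff_le_of_test (P := P) (Q := Q) hm' hr' hl'
    rw [integral_const_mul] at hkey
    have hQ0 : 0 ≤ ∫ x, φ x ∂Q := test_integral_nonneg hr
    have hQ1 : ∫ x, φ x ∂Q ≤ 1 := test_integral_le_one hm hr
    have hfr : 1 - a / b ≤ ε / 3 := by
      have h1 : 1 - a / b = (b - a) / b := by field_simp
      have h2 : (b - a) / b ≤ (t * ε / 3) / t :=
        div_le_div₀ (by positivity) hδ ht0 hbt
      rw [h1]
      calc (b-a)/b ≤ (t * ε / 3) / t := h2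
        _ = ε / 3 := by field_simp
    have : 1 - (a / b) * ∫ x, φ x ∂Q ≤ (1 - ∫ x, φ x ∂Q) + (1 - a/b) := by
      nlinarith
    linarith


end TM

open TM

/-- monotonicity of composition: `g₁ ≤ g₂ → f ⊗ g₁ ≤ f ⊗ g₂`. -/
theorem tensor_mono
    {Ω Ω₁ Ω₂ : Type*} [MeasurableSpace Ω] [MeasurableSpace Ω₁] [MeasurableSpace Ω₂]
    (P Q : Measure Ω) (P₁ Q₁ : Measure Ω₁) (P₂ Q₂ : Measure Ω₂)
    [IsProbabilityMeasure P] [IsProbabilityMeasure Q] [IsProbabilityMeasure P₁]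
    [IsProbabilityMeasure Q₁] [IsProbabilityMeasure P₂] [IsProbabilityMeasure Q₂]
    (h : ∀ α ∈ Icc (0:ℝ) 1, tradeoff P₁ Q₁ α ≤ tradeoff P₂ Q₂ α) :
    ∀ α ∈ Icc (0:ℝ) 1,
      tradeoff (P.prod P₁) (Q.prod Q₁) α ≤ tradeoff (P.prod P₂) (Q.prod Q₂) α := by
  rintro α ⟨hα0, hα1⟩
  rw [tradeoff_eq (P.prod P₂) (Q.prod Q₂) α]
  refine le_csInf (feas_nonempty hα0) ?_
  rintro β ⟨φ, hφm, hφr, hφl, rfl⟩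
  refine le_of_forall_pos_le_add fun ε hε => ?_
  -- uniform continuity modulus for tradeoff P₂ Q₂
  obtain ⟨δ, hδ0, hδ⟩ := unif_cont (P := P₂) (Q := Q₂) (show (0:ℝ) < ε/3 by linarith)
  obtain ⟨n₀, hn₀⟩ := exists_nat_one_div_lt hδ0
  set n : ℕ := n₀ + 1 with hn
  have hnpos : 0 < (n:ℝ) := by positivity
  have hinv : (1:ℝ)/n ≤ δ := by
    rw [hn]; push_cast; exact hn₀.le
  -- near optimal tests for (P₁, Q₁) at each grid level k/n
  have hψ : ∀ k : ℕ, ∃ ψ : Ω₁ → ℝ, Measurable ψ ∧ (∀ y, ψ y ∈ Icc (0:ℝ) 1) ∧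
      (∫ y, ψ y ∂P₁) ≤ (k:ℝ)/n ∧
      1 - (∫ y, ψ y ∂Q₁) ≤ tradeoff P₁ Q₁ ((k:ℝ)/n) + ε/3 :=
    fun k => exists_near_test (by positivity) (show (0:ℝ) < ε/3 by linarith)
  choose ψ hmψ hrψ hlψ hnψ using hψ
  -- slice level function
  set A : Ω → ℝ := fun x => ∫ y, φ (x, y) ∂P₂ with hA
  have hφsm : StronglyMeasurable φ := hφm.stronglyMeasurable
  have hAsm : StronglyMeasurable A := hφsm.integral_prod_right'
  have hAmeas : Measurable A := hAsm.measurable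
  have hφslice : ∀ x : Ω, Measurable fun y => φ (x, y) :=
    fun x => hφm.comp measurable_prodMk_left
  have hφslicer : ∀ x : Ω, ∀ y, φ (x, y) ∈ Icc (0:ℝ) 1 := fun x y => hφr (x, y)
  have hA01 : ∀ x, A x ∈ Icc (0:ℝ) 1 := fun x =>
    ⟨test_integral_nonneg (hφslicer x), test_integral_le_one (hφslice x) (hφslicer x)⟩
  -- grid index
  set K : Ω → ℕ := fun x => ⌊(n:ℝ) * A x⌋₊ with hK
  have hKmeas : Measurable K := (hAmeas.const_mul _).nat_floor
  have hKle : ∀ x, ((K x : ℝ))/n ≤ A x := by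
    intro x
    rw [div_le_iff₀ hnpos, mul_comm]
    exact Nat.floor_le (mul_nonneg hnpos.le (hA01 x).1)
  have hKge : ∀ x, A x - ((K x : ℝ))/n ≤ 1/n := by
    intro x
    have h1 : (n:ℝ) * A x < (K x : ℝ) + 1 := Nat.lt_floor_add_one _
    have h2 : A x ≤ ((K x : ℝ) + 1)/n := by
      rw [le_div_iff₀ hnpos, mul_comm]; exact h1.le
    have h3 : ((K x : ℝ) + 1)/n - ((K x : ℝ))/n = 1/n := by ring
    linarith
  have hK0 : ∀ x, 0 ≤ ((K x : ℝ))/n := fun x => by positivity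
  have hK1 : ∀ x, ((K x : ℝ))/n ≤ 1 := fun x => (hKle x).trans (hA01 x).2
  -- composite test on the product space
  set Ψ : Ω × Ω₁ → ℝ := fun p => ψ (K p.1) p.2 with hΨ
  have hΨmeas : Measurable Ψ := by
    have hf : Measurable fun q : Ω₁ × ℕ => ψ q.2 q.1 :=
      measurable_from_prod_countable_left fun k => hmψ k
    exact hf.comp (measurable_snd.prodMk (hKmeas.comp measurable_fst))
  have hΨr : ∀ p, Ψ p ∈ Icc (0:ℝ) 1 := fun p => hrψ _ _
  have hΨintP : Integrable Ψ ((P.prod P₁)) := test_integrable hΨmeas hΨr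
  have hΨintQ : Integrable Ψ ((Q.prod Q₁)) := test_integrable hΨmeas hΨr
  have hφintP : Integrable φ ((P.prod P₂)) := test_integrable hφm hφr
  have hφintQ : Integrable φ ((Q.prod Q₂)) := test_integrable hφm hφr
  -- type I error of Ψ
  have hB01 : ∀ x, (∫ y, ψ (K x) y ∂P₁) ∈ Icc (0:ℝ) 1 := fun x =>
    ⟨test_integral_nonneg (hrψ _), test_integral_le_one (hmψ _) (hrψ _)⟩
  have hBsm : StronglyMeasurable fun x => ∫ y, ψ (K x) y ∂P₁ :=
    hΨmeas.stronglyMeasurable.integral_prod_right'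
  have htypeI : (∫ p, Ψ p ∂(P.prod P₁)) ≤ α := by
    rw [integral_prod Ψ hΨintP]
    have h1 : ∫ x, (∫ y, ψ (K x) y ∂P₁) ∂P ≤ ∫ x, A x ∂P := by
      refine integral_mono (test_integrable hBsm.measurable hB01)
        (test_integrable hAmeas hA01) fun x => ?_
      exact (hlψ (K x)).trans (hKle x)
    have h2 : ∫ x, A x ∂P = ∫ p, φ p ∂(P.prod P₂) := (integral_prod φ hφintP).symm
    calc ∫ x, (∫ y, Ψ (x, y) ∂P₁) ∂P = ∫ x, (∫ y, ψ (K x) y ∂P₁) ∂P := rfl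
      _ ≤ ∫ x, A x ∂P := h1
      _ = ∫ p, φ p ∂(P.prod P₂) := h2
      _ ≤ α := hφl
  have hleft : tradeoff (P.prod P₁) (Q.prod Q₁) α ≤ 1 - ∫ p, Ψ p ∂(Q.prod Q₁) :=
    tradeoff_le_of_test hΨmeas hΨr htypeI
  -- type II comparison, pointwise in x
  have hpt : ∀ x, (∫ y, φ (x, y) ∂Q₂) ≤ (∫ y, ψ (K x) y ∂Q₁) + (2*ε/3) := by
    intro x
    have c1 : 1 - (∫ y, ψ (K x) y ∂Q₁) ≤ tradeoff P₁ Q₁ ((K x : ℝ)/n) + ε/3 := hnψ (K x)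
    have c2 : tradeoff P₁ Q₁ ((K x : ℝ)/n) ≤ tradeoff P₂ Q₂ ((K x : ℝ)/n) :=
      h _ ⟨hK0 x, hK1 x⟩
    have c3 : tradeoff P₂ Q₂ ((K x : ℝ)/n) ≤ tradeoff P₂ Q₂ (A x) + ε/3 :=
      hδ _ _ (hK0 x) (hKle x) (hA01 x).2 ((hKge x).trans hinv)
    have c4 : tradeoff P₂ Q₂ (A x) ≤ 1 - ∫ y, φ (x, y) ∂Q₂ :=
      tradeoff_le_of_test (hφslice x) (hφslicer x) le_rfl
    linarith
  -- integrate the pointwise bound over Q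
  have hu01 : ∀ x, (∫ y, ψ (K x) y ∂Q₁) ∈ Icc (0:ℝ) 1 := fun x =>
    ⟨test_integral_nonneg (hrψ _), test_integral_le_one (hmψ _) (hrψ _)⟩
  have husm : StronglyMeasurable fun x => ∫ y, ψ (K x) y ∂Q₁ :=
    hΨmeas.stronglyMeasurable.integral_prod_right'
  have hv01 : ∀ x, (∫ y, φ (x, y) ∂Q₂) ∈ Icc (0:ℝ) 1 := fun x =>
    ⟨test_integral_nonneg (hφslicer x), test_integral_le_one (hφslice x) (hφslicer x)⟩
  have hvsm : StronglyMeasurable fun x => ∫ y, φ (x, y) ∂Q₂ :=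
    hφsm.integral_prod_right'
  have hint : ∫ x, (∫ y, φ (x, y) ∂Q₂) ∂Q
      ≤ ∫ x, (∫ y, ψ (K x) y ∂Q₁) ∂Q + 2*ε/3 := by
    have := integral_mono (μ := Q) (test_integrable hvsm.measurable hv01)
      ((test_integrable husm.measurable hu01).add (integrable_const (2*ε/3))) hpt
    simp only [Pi.add_apply] at this
    rw [integral_add (test_integrable husm.measurable hu01)
      (integrable_const (2*ε/3))] at this
    simpa using this
  have hQ1eq : ∫ p, Ψ p ∂(Q.prod Q₁) = ∫ x, (∫ y, ψ (K x) y ∂Q₁) ∂Q :=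
    integral_prod Ψ hΨintQ
  have hQ2eq : ∫ p, φ p ∂(Q.prod Q₂) = ∫ x, (∫ y, φ (x, y) ∂Q₂) ∂Q :=
    integral_prod φ hφintQ
  calc tradeoff (P.prod P₁) (Q.prod Q₁) α
      ≤ 1 - ∫ p, Ψ p ∂(Q.prod Q₁) := hleft
    _ ≤ 1 - ∫ p, φ p ∂(Q.prod Q₂) + 2*ε/3 := by
        rw [hQ1eq, hQ2eq]; linarith
    _ ≤ 1 - ∫ p, φ p ∂(Q.prod Q₂) + ε := by linarith
end

section
/- Gaussian composition: for real numbers μ₁, μ₂, the composition of Gaussian trade-off functions satisfies G_{μ₁} ⊗ G_{μ₂} = G_{√(μ₁² + μ₂²)}, where G_μ := T(N(0,1), N(μ,1)). Consequently, a k-fold composition gives G_{μ₁} ⊗ ⋯ ⊗ G_{μ_k} = G_μ with μ = √(μ₁² + ⋯ + μ_k²). -/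
open MeasureTheory ProbabilityTheory Set Filter

open scoped ENNReal NNReal

namespace GaussComp

variable {Ω Ω' Ω'' : Type*} [MeasurableSpace Ω] [MeasurableSpace Ω'] [MeasurableSpace Ω'']

/-- `(P, Q)` can be simulated from `(P', Q')` by a common randomized map. -/
def Red (P Q : Measure Ω) (P' Q' : Measure Ω') : Prop :=
  ∃ (N : Type) (_ : MeasurableSpace N) (ρ : Measure N) (g : Ω' × N → Ω),
    IsProbabilityMeasure ρ ∧ Measurable g ∧
    (P'.prod ρ).map g = P ∧ (Q'.prod ρ).map g = Q

lemma Red.of_map {P Q : Measure Ω} {P' Q' : Measure Ω'}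
    [IsProbabilityMeasure P'] [IsProbabilityMeasure Q']
    {f : Ω' → Ω} (hf : Measurable f) (h1 : P'.map f = P) (h2 : Q'.map f = Q) :
    Red P Q P' Q' := by
  refine ⟨Unit, inferInstance, Measure.dirac (), fun p => f p.1, inferInstance,
    hf.comp measurable_fst, ?_, ?_⟩
  · rw [show (fun p : Ω' × Unit => f p.1) = f ∘ Prod.fst from rfl,
      ← Measure.map_map hf measurable_fst, Measure.map_fst_prod]
    simp [h1]
  · rw [show (fun p : Ω' × Unit => f p.1) = f ∘ Prod.fst from rfl,
      ← Measure.map_map hf measurable_fst, Measure.map_fst_prod]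
    simp [h2]

lemma Red.refl (P Q : Measure Ω) [IsProbabilityMeasure P] [IsProbabilityMeasure Q] :
    Red P Q P Q :=
  Red.of_map measurable_id (Measure.map_id) (Measure.map_id)

lemma Red.trans {P Q : Measure Ω} {P' Q' : Measure Ω'} {P'' Q'' : Measure Ω''}
    [IsProbabilityMeasure P''] [IsProbabilityMeasure Q'']
    (h1 : Red P Q P' Q') (h2 : Red P' Q' P'' Q'') : Red P Q P'' Q'' := by
  obtain ⟨N, mN, ρ, g, hρ, hg, hgP, hgQ⟩ := h1
  obtain ⟨M, mM, σ, h, hσ, hh, hhP, hhQ⟩ := h2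
  haveI := hρ; haveI := hσ
  refine ⟨M × N, inferInstance, σ.prod ρ, fun p => g (h (p.1, p.2.1), p.2.2), inferInstance,
    hg.comp ((hh.comp (measurable_fst.prodMk (measurable_fst.comp measurable_snd))).prodMk
      (measurable_snd.comp measurable_snd)), ?_, ?_⟩
  · have hassoc : (P''.prod (σ.prod ρ))
        = ((P''.prod σ).prod ρ).map MeasurableEquiv.prodAssoc :=
      (Measure.prodAssoc_prod (μ := P'') (ν := σ) (τ := ρ)).symm
    rw [hassoc, Measure.map_map (by
        exact hg.comp ((hh.comp (measurable_fst.prodMk (measurable_fst.comp measurable_snd))).prodMk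
          (measurable_snd.comp measurable_snd))) MeasurableEquiv.prodAssoc.measurable]
    have hfun : ((fun p : Ω'' × (M × N) => g (h (p.1, p.2.1), p.2.2)) ∘ MeasurableEquiv.prodAssoc)
        = g ∘ Prod.map h id := rfl
    rw [hfun, ← Measure.map_map hg (hh.prodMap measurable_id),
      ← Measure.map_prod_map _ _ hh measurable_id, Measure.map_id, hhP, hgP]
  · have hassoc : (Q''.prod (σ.prod ρ))
        = ((Q''.prod σ).prod ρ).map MeasurableEquiv.prodAssoc :=
      (Measure.prodAssoc_prod (μ := Q'') (ν := σ) (τ := ρ)).symm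
    rw [hassoc, Measure.map_map (by
        exact hg.comp ((hh.comp (measurable_fst.prodMk (measurable_fst.comp measurable_snd))).prodMk
          (measurable_snd.comp measurable_snd))) MeasurableEquiv.prodAssoc.measurable]
    have hfun : ((fun p : Ω'' × (M × N) => g (h (p.1, p.2.1), p.2.2)) ∘ MeasurableEquiv.prodAssoc)
        = g ∘ Prod.map h id := rfl
    rw [hfun, ← Measure.map_map hg (hh.prodMap measurable_id),
      ← Measure.map_prod_map _ _ hh measurable_id, Measure.map_id, hhQ, hgQ]

/-- the middle-four shuffle is measure preserving on products. -/
lemma measurePreserving_shuffle {A B C D : Type*} [MeasurableSpace A] [MeasurableSpace B]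
    [MeasurableSpace C] [MeasurableSpace D] (μ : Measure A) (ν : Measure B) (κ : Measure C)
    (ξ : Measure D) [SFinite μ] [SFinite ν] [SFinite κ] [SFinite ξ] :
    MeasurePreserving (fun p : (A × B) × C × D => ((p.1.1, p.2.1), (p.1.2, p.2.2)))
      ((μ.prod ν).prod (κ.prod ξ)) ((μ.prod κ).prod (ν.prod ξ)) := by
  have step1 := measurePreserving_prodAssoc (μa := μ) (μb := ν) (μc := κ.prod ξ)
  have inner1 := (measurePreserving_prodAssoc (μa := ν) (μb := κ) (μc := ξ)).symm
      (MeasurableEquiv.prodAssoc)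
  have inner2 := (Measure.measurePreserving_swap (μ := ν) (ν := κ)).prod (MeasurePreserving.id ξ)
  have inner3 := measurePreserving_prodAssoc (μa := κ) (μb := ν) (μc := ξ)
  have inner : MeasurePreserving
      (fun q : B × C × D => (q.2.1, (q.1, q.2.2))) (ν.prod (κ.prod ξ)) (κ.prod (ν.prod ξ)) := by
    have h := inner3.comp (inner2.comp inner1)
    have hfun : (⇑MeasurableEquiv.prodAssoc ∘ Prod.map Prod.swap id ∘ ⇑MeasurableEquiv.prodAssoc.symm)
        = (fun q : B × C × D => (q.2.1, (q.1, q.2.2))) := rfl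
    rw [← hfun]
    exact (inner3.comp inner2).comp inner1
  have step2 := (MeasurePreserving.id μ).prod inner
  have step3 := (measurePreserving_prodAssoc (μa := μ) (μb := κ) (μc := ν.prod ξ)).symm
      (MeasurableEquiv.prodAssoc)
  have h := step3.comp (step2.comp step1)
  have hfun : (⇑MeasurableEquiv.prodAssoc.symm ∘
        (Prod.map id fun q : B × C × D => (q.2.1, (q.1, q.2.2))) ∘ ⇑MeasurableEquiv.prodAssoc)
      = (fun p : (A × B) × C × D => ((p.1.1, p.2.1), (p.1.2, p.2.2))) := rfl
  rw [← hfun]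
  exact step3.comp (step2.comp step1)

section RedProd

variable {Ω₁ Ω₂ Ω₁' Ω₂' : Type*} [MeasurableSpace Ω₁] [MeasurableSpace Ω₂]
  [MeasurableSpace Ω₁'] [MeasurableSpace Ω₂']

lemma Red.prod {P₁ Q₁ : Measure Ω₁} {P₂ Q₂ : Measure Ω₂} {P₁' Q₁' : Measure Ω₁'}
    {P₂' Q₂' : Measure Ω₂'}
    [IsProbabilityMeasure P₁'] [IsProbabilityMeasure Q₁']
    [IsProbabilityMeasure P₂'] [IsProbabilityMeasure Q₂']
    (h1 : Red P₁ Q₁ P₁' Q₁') (h2 : Red P₂ Q₂ P₂' Q₂') :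
    Red (P₁.prod P₂) (Q₁.prod Q₂) (P₁'.prod P₂') (Q₁'.prod Q₂') := by
  obtain ⟨N, mN, ρ, g, hρ, hg, hgP, hgQ⟩ := h1
  obtain ⟨M, mM, σ, h, hσ, hh, hhP, hhQ⟩ := h2
  haveI := hρ; haveI := hσ
  refine ⟨N × M, inferInstance, ρ.prod σ,
    fun p => (g (p.1.1, p.2.1), h (p.1.2, p.2.2)), inferInstance,
    (hg.comp ((measurable_fst.comp measurable_fst).prodMk
      (measurable_fst.comp measurable_snd))).prodMk
      (hh.comp ((measurable_snd.comp measurable_fst).prodMk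
      (measurable_snd.comp measurable_snd))), ?_, ?_⟩
  · have hshuf := (measurePreserving_shuffle P₁' P₂' ρ σ).map_eq
    have hfun : (fun p : (Ω₁' × Ω₂') × N × M => (g (p.1.1, p.2.1), h (p.1.2, p.2.2)))
        = (Prod.map g h) ∘ (fun p : (Ω₁' × Ω₂') × N × M => ((p.1.1, p.2.1), (p.1.2, p.2.2))) := rfl
    rw [hfun, ← Measure.map_map (hg.prodMap hh) (measurePreserving_shuffle P₁' P₂' ρ σ).measurable,
      hshuf, ← Measure.map_prod_map _ _ hg hh, hgP, hhP]
  · have hshuf := (measurePreserving_shuffle Q₁' Q₂' ρ σ).map_eq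
    have hfun : (fun p : (Ω₁' × Ω₂') × N × M => (g (p.1.1, p.2.1), h (p.1.2, p.2.2)))
        = (Prod.map g h) ∘ (fun p : (Ω₁' × Ω₂') × N × M => ((p.1.1, p.2.1), (p.1.2, p.2.2))) := rfl
    rw [hfun, ← Measure.map_map (hg.prodMap hh) (measurePreserving_shuffle Q₁' Q₂' ρ σ).measurable,
      hshuf, ← Measure.map_prod_map _ _ hg hh, hgQ, hhQ]

end RedProd

lemma integrable_of_Icc {X : Type*} [MeasurableSpace X] {m : Measure X} [IsFiniteMeasure m]
    {f : X → ℝ} (hm : Measurable f) (h : ∀ x, f x ∈ Icc (0:ℝ) 1) : Integrable f m :=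
  (integrable_const (1:ℝ)).mono' hm.aestronglyMeasurable
    (ae_of_all _ fun x => by
      rw [Real.norm_eq_abs, abs_of_nonneg (h x).1]; exact (h x).2)

lemma tradeoff_le_of_red {P Q : Measure Ω} {P' Q' : Measure Ω'}
    [IsProbabilityMeasure P] [IsProbabilityMeasure Q]
    [IsProbabilityMeasure P'] [IsProbabilityMeasure Q']
    (hred : Red P Q P' Q') {α : ℝ} (hα : 0 ≤ α) :
    tradeoff P' Q' α ≤ tradeoff P Q α := by
  obtain ⟨N, mN, ρ, g, hρ, hg, hgP, hgQ⟩ := hred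
  haveI := hρ
  apply csInf_le_csInf
  · refine ⟨0, ?_⟩
    rintro β ⟨φ, hφm, hφ01, -, rfl⟩
    have h1 : ∫ x, φ x ∂Q' ≤ 1 := by
      calc ∫ x, φ x ∂Q' ≤ ∫ _, (1:ℝ) ∂Q' :=
            integral_mono (integrable_of_Icc hφm hφ01) (integrable_const 1) fun x => (hφ01 x).2
        _ = 1 := by simp
    linarith
  · exact ⟨1, fun _ => 0, measurable_const, fun x => by norm_num,
      by simpa using hα, by simp⟩
  · rintro β ⟨φ, hφm, hφ01, hφα, rfl⟩
    set ψ : Ω' → ℝ := fun ω' => ∫ n, φ (g (ω', n)) ∂ρ with hψ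
    have hcomp : Measurable fun p : Ω' × N => φ (g p) := hφm.comp hg
    have hψm : Measurable ψ :=
      hcomp.stronglyMeasurable.integral_prod_right'.measurable
    have key : ∀ (m : Measure Ω) (m' : Measure Ω'), IsProbabilityMeasure m →
        IsProbabilityMeasure m' → (m'.prod ρ).map g = m → ∫ x, ψ x ∂m' = ∫ x, φ x ∂m := by
      intro m m' hm hm' hmap
      haveI := hm; haveI := hm'
      rw [← hmap, integral_map hg.aemeasurable (by
        rw [hmap]; exact (integrable_of_Icc hφm hφ01).aestronglyMeasurable.congr (by rfl) )]
      exact (integral_prod _ (integrable_of_Icc hcomp fun p => hφ01 _)).symm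
    refine ⟨ψ, hψm, fun ω' => ⟨integral_nonneg fun n => (hφ01 _).1, ?_⟩, ?_, ?_⟩
    · calc ∫ n, φ (g (ω', n)) ∂ρ ≤ ∫ _, (1:ℝ) ∂ρ :=
          integral_mono (integrable_of_Icc (hcomp.comp measurable_prodMk_left)
            fun n => hφ01 _) (integrable_const 1) fun n => (hφ01 _).2
        _ = 1 := by simp
    · rw [key P P' inferInstance inferInstance hgP]; exact hφα
    · rw [key Q Q' inferInstance inferInstance hgQ]


/-! ### Gaussian facts -/

lemma map_withDensity_equiv {A B : Type*} [MeasurableSpace A] [MeasurableSpace B]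
    (μ : Measure A) (e : A ≃ᵐ B) {f : A → ℝ≥0∞} (hf : Measurable f) :
    (μ.withDensity f).map e = (μ.map e).withDensity (f ∘ e.symm) := by
  ext s hs
  rw [Measure.map_apply e.measurable hs, withDensity_apply _ (e.measurable hs),
    withDensity_apply _ hs,
    setLIntegral_map hs (hf.comp e.symm.measurable) e.measurable]
  simp

lemma gauss_prod_eq_withDensity :
    ((gaussianReal 0 1).prod (gaussianReal 0 1))
      = ((volume : Measure ℝ).prod volume).withDensity
          fun p => gaussianPDF 0 1 p.1 * gaussianPDF 0 1 p.2 := by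
  have h1 : gaussianReal 0 1 = (volume : Measure ℝ).withDensity (gaussianPDF 0 1) :=
    gaussianReal_of_var_ne_zero 0 one_ne_zero
  haveI : IsProbabilityMeasure ((volume : Measure ℝ).withDensity (gaussianPDF 0 1)) := by
    rw [← h1]; infer_instance
  rw [h1]
  refine Measure.prod_eq fun s t hs ht => ?_
  rw [withDensity_apply _ (hs.prod ht), ← Measure.prod_restrict,
    lintegral_prod_mul (measurable_gaussianPDF 0 1).aemeasurable
      (measurable_gaussianPDF 0 1).aemeasurable,
    withDensity_apply _ hs, withDensity_apply _ ht]

variable {c s : ℝ}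

/-- the reflection `(x, y) ↦ (cx + sy, sx - cy)`. -/
def reflMap (c s : ℝ) : ℝ × ℝ → ℝ × ℝ := fun p => (c * p.1 + s * p.2, s * p.1 - c * p.2)

lemma measurable_reflMap : Measurable (reflMap c s) := by
  unfold reflMap; fun_prop

lemma reflMap_invol (h : c ^ 2 + s ^ 2 = 1) (p : ℝ × ℝ) :
    reflMap c s (reflMap c s p) = p := by
  unfold reflMap
  obtain ⟨x, y⟩ := p
  simp only [Prod.mk.injEq]
  constructor
  · linear_combination x * h
  · linear_combination y * h

/-- the reflection as a measurable equiv. -/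
def reflEquiv (c s : ℝ) (h : c ^ 2 + s ^ 2 = 1) : (ℝ × ℝ) ≃ᵐ (ℝ × ℝ) where
  toFun := reflMap c s
  invFun := reflMap c s
  left_inv := reflMap_invol h
  right_inv := reflMap_invol h
  measurable_toFun := measurable_reflMap
  measurable_invFun := measurable_reflMap

lemma volume_map_reflMap (h : c ^ 2 + s ^ 2 = 1) :
    (volume : Measure (ℝ × ℝ)).map (reflMap c s) = volume := by
  have hL : reflMap c s
      = ⇑(Matrix.toLin (Module.Basis.finTwoProd ℝ) (Module.Basis.finTwoProd ℝ) !![c, s; s, -c]) := by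
    funext p
    rw [Matrix.toLin_finTwoProd_apply]
    unfold reflMap
    simp only [Prod.mk.injEq]
    exact ⟨trivial, by ring⟩
  have hdet : LinearMap.det
      (Matrix.toLin (Module.Basis.finTwoProd ℝ) (Module.Basis.finTwoProd ℝ) !![c, s; s, -c]) = -1 := by
    rw [LinearMap.det_toLin, Matrix.det_fin_two_of]
    linear_combination -h
  rw [hL, Measure.map_linearMap_addHaar_eq_smul_addHaar _ (by rw [hdet]; norm_num), hdet]
  norm_num

lemma pdfprod_reflMap (h : c ^ 2 + s ^ 2 = 1) (p : ℝ × ℝ) :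
    gaussianPDF 0 1 (reflMap c s p).1 * gaussianPDF 0 1 (reflMap c s p).2
      = gaussianPDF 0 1 p.1 * gaussianPDF 0 1 p.2 := by
  obtain ⟨x, y⟩ := p
  unfold reflMap gaussianPDF
  simp only
  rw [← ENNReal.ofReal_mul (gaussianPDFReal_nonneg _ _ _),
    ← ENNReal.ofReal_mul (gaussianPDFReal_nonneg _ _ _)]
  congr 1
  unfold gaussianPDFReal
  rw [mul_mul_mul_comm, ← Real.exp_add, mul_mul_mul_comm, ← Real.exp_add]
  congr 1
  rw [Real.exp_eq_exp]
  push_cast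
  linear_combination (-(x ^ 2 + y ^ 2) / 2) * h

lemma gauss_prod_map_reflMap (h : c ^ 2 + s ^ 2 = 1) :
    ((gaussianReal 0 1).prod (gaussianReal 0 1)).map (reflMap c s)
      = (gaussianReal 0 1).prod (gaussianReal 0 1) := by
  have hcoe : reflMap c s = ⇑(reflEquiv c s h) := rfl
  have hsymm : ⇑(reflEquiv c s h).symm = reflMap c s := rfl
  rw [gauss_prod_eq_withDensity, hcoe,
    map_withDensity_equiv _ (reflEquiv c s h)
      (f := fun p => gaussianPDF 0 1 p.1 * gaussianPDF 0 1 p.2)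
      (((measurable_gaussianPDF 0 1).comp measurable_fst).mul
        ((measurable_gaussianPDF 0 1).comp measurable_snd))]
  rw [show ((volume : Measure ℝ).prod volume) = (volume : Measure (ℝ × ℝ)) from
      (MeasureTheory.Measure.volume_eq_prod ℝ ℝ).symm, ← hcoe, volume_map_reflMap h]
  congr 1
  funext p
  simp only [Function.comp_apply, hsymm]
  exact pdfprod_reflMap h p

lemma gauss_prod_shift_map_reflMap (h : c ^ 2 + s ^ 2 = 1) (a b : ℝ) :
    ((gaussianReal a 1).prod (gaussianReal b 1)).map (reflMap c s)
      = (gaussianReal (c * a + s * b) 1).prod (gaussianReal (s * a - c * b) 1) := by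
  have ha : gaussianReal a 1 = (gaussianReal 0 1).map (· + a) := by
    rw [gaussianReal_map_add_const]; norm_num
  have hb : gaussianReal b 1 = (gaussianReal 0 1).map (· + b) := by
    rw [gaussianReal_map_add_const]; norm_num
  have hma : Measurable fun x : ℝ => x + a := by fun_prop
  have hmb : Measurable fun x : ℝ => x + b := by fun_prop
  rw [ha, hb, Measure.map_prod_map _ _ hma hmb,
    Measure.map_map measurable_reflMap (hma.prodMap hmb)]
  have key : reflMap c s ∘ Prod.map (· + a) (· + b)
      = (Prod.map (· + (c * a + s * b)) (· + (s * a - c * b))) ∘ reflMap c s := by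
    funext p
    simp only [Function.comp_apply, Prod.map, reflMap, Prod.mk.injEq]
    constructor <;> ring
  rw [key, ← Measure.map_map ((by fun_prop : Measurable fun x : ℝ => x + (c * a + s * b)).prodMap
      (by fun_prop : Measurable fun x : ℝ => x + (s * a - c * b))) measurable_reflMap,
    gauss_prod_map_reflMap h,
    ← Measure.map_prod_map _ _ (by fun_prop) (by fun_prop),
    gaussianReal_map_add_const, gaussianReal_map_add_const]
  norm_num

/-! ### The binary Gaussian reduction -/

lemma gauss_red_pair (μ₁ μ₂ : ℝ) :
    Red ((gaussianReal 0 1).prod (gaussianReal 0 1))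
        ((gaussianReal μ₁ 1).prod (gaussianReal μ₂ 1))
        (gaussianReal 0 1) (gaussianReal (Real.sqrt (μ₁ ^ 2 + μ₂ ^ 2)) 1) ∧
    Red (gaussianReal 0 1) (gaussianReal (Real.sqrt (μ₁ ^ 2 + μ₂ ^ 2)) 1)
        ((gaussianReal 0 1).prod (gaussianReal 0 1))
        ((gaussianReal μ₁ 1).prod (gaussianReal μ₂ 1)) := by
  by_cases h0 : μ₁ = 0 ∧ μ₂ = 0
  · obtain ⟨h1, h2⟩ := h0
    subst h1; subst h2
    have hs0 : Real.sqrt ((0:ℝ) ^ 2 + 0 ^ 2) = 0 := by norm_num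
    rw [hs0]
    constructor
    · exact ⟨ℝ, inferInstance, gaussianReal 0 1, id, inferInstance, measurable_id,
        Measure.map_id, Measure.map_id⟩
    · refine Red.of_map measurable_fst ?_ ?_ <;>
        · rw [Measure.map_fst_prod]; simp
  · have hpos : 0 < μ₁ ^ 2 + μ₂ ^ 2 := by
      rcases not_and_or.mp h0 with h | h <;> rcases lt_or_gt_of_ne h with hl | hl <;>
        nlinarith [sq_nonneg μ₁, sq_nonneg μ₂]
    set μ := Real.sqrt (μ₁ ^ 2 + μ₂ ^ 2) with hμdef
    have hμpos : 0 < μ := Real.sqrt_pos.mpr hpos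
    have hμsq : μ ^ 2 = μ₁ ^ 2 + μ₂ ^ 2 := Real.sq_sqrt hpos.le
    set c := μ₁ / μ with hcdef
    set s := μ₂ / μ with hsdef
    have hcs : c ^ 2 + s ^ 2 = 1 := by
      rw [hcdef, hsdef]
      field_simp
      linarith [hμsq]
    have e1 : c * μ + s * 0 = μ₁ := by rw [hcdef, hsdef]; field_simp; ring
    have e2 : s * μ - c * 0 = μ₂ := by rw [hcdef, hsdef]; field_simp; ring
    have e3 : c * μ₁ + s * μ₂ = μ := by
      rw [hcdef, hsdef]; field_simp; linarith [hμsq]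
    constructor
    · refine ⟨ℝ, inferInstance, gaussianReal 0 1, reflMap c s, inferInstance,
        measurable_reflMap, ?_, ?_⟩
      · exact gauss_prod_map_reflMap hcs
      · rw [gauss_prod_shift_map_reflMap hcs μ 0, e1, e2]
    · refine Red.of_map (f := fun p : ℝ × ℝ => c * p.1 + s * p.2) (by fun_prop) ?_ ?_
      · have hf : (fun p : ℝ × ℝ => c * p.1 + s * p.2) = Prod.fst ∘ reflMap c s := rfl
        rw [hf, ← Measure.map_map measurable_fst measurable_reflMap,
          gauss_prod_map_reflMap hcs, Measure.map_fst_prod]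
        simp
      · have hf : (fun p : ℝ × ℝ => c * p.1 + s * p.2) = Prod.fst ∘ reflMap c s := rfl
        rw [hf, ← Measure.map_map measurable_fst measurable_reflMap,
          gauss_prod_shift_map_reflMap hcs μ₁ μ₂, Measure.map_fst_prod, e3]
        simp

/-! ### The `k`-fold Gaussian reduction -/

lemma gauss_red_pi (k : ℕ) (μs : Fin k → ℝ) :
    Red (Measure.pi fun _ : Fin k => gaussianReal 0 1)
        (Measure.pi fun i => gaussianReal (μs i) 1)
        (gaussianReal 0 1) (gaussianReal (Real.sqrt (∑ i, μs i ^ 2)) 1) ∧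
    Red (gaussianReal 0 1) (gaussianReal (Real.sqrt (∑ i, μs i ^ 2)) 1)
        (Measure.pi fun _ : Fin k => gaussianReal 0 1)
        (Measure.pi fun i => gaussianReal (μs i) 1) := by
  induction k with
  | zero =>
    have hsum : (∑ i : Fin 0, μs i ^ 2) = 0 := by simp
    rw [hsum, Real.sqrt_zero]
    set x₀ : Fin 0 → ℝ := fun i => i.elim0 with hx₀
    have hpi1 : (Measure.pi fun _ : Fin 0 => gaussianReal 0 1) = Measure.dirac x₀ :=
      Measure.pi_of_empty _ x₀
    have hpi2 : (Measure.pi fun i : Fin 0 => gaussianReal (μs i) 1) = Measure.dirac x₀ :=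
      Measure.pi_of_empty _ x₀
    rw [hpi1, hpi2]
    constructor
    · exact Red.of_map (f := fun _ => x₀) measurable_const
        (by rw [Measure.map_const]; simp) (by rw [Measure.map_const]; simp)
    · exact ⟨ℝ, inferInstance, gaussianReal 0 1, Prod.snd, inferInstance, measurable_snd,
        by rw [Measure.map_snd_prod]; simp, by rw [Measure.map_snd_prod]; simp⟩
  | succ k ih =>
    obtain ⟨ih1, ih2⟩ := ih (fun j => μs j.succ)
    set ν := Real.sqrt (∑ j : Fin k, μs j.succ ^ 2) with hνdef
    have hν2 : ν ^ 2 = ∑ j : Fin k, μs j.succ ^ 2 :=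
      Real.sq_sqrt (Finset.sum_nonneg fun j _ => sq_nonneg _)
    have hμtot : Real.sqrt (μs 0 ^ 2 + ν ^ 2) = Real.sqrt (∑ i, μs i ^ 2) := by
      rw [hν2, Fin.sum_univ_succ]
    set e := MeasurableEquiv.piFinSuccAbove (fun _ : Fin (k + 1) => ℝ) 0 with hedef
    have hP : (Measure.pi fun _ : Fin (k + 1) => gaussianReal 0 1).map e
        = (gaussianReal 0 1).prod (Measure.pi fun _ : Fin k => gaussianReal 0 1) :=
      (measurePreserving_piFinSuccAbove (fun _ : Fin (k + 1) => gaussianReal 0 1) 0).map_eq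
    have htail : (fun j : Fin k => gaussianReal (μs ((0 : Fin (k + 1)).succAbove j)) 1)
        = fun j => gaussianReal (μs j.succ) 1 := by
      funext j; rw [Fin.zero_succAbove]
    have hQ : (Measure.pi fun i => gaussianReal (μs i) 1).map e
        = (gaussianReal (μs 0) 1).prod (Measure.pi fun j : Fin k => gaussianReal (μs j.succ) 1) := by
      have := (measurePreserving_piFinSuccAbove (fun i => gaussianReal (μs i) 1) 0).map_eq
      rw [htail] at this
      exact this
    have hPe : ((gaussianReal 0 1).prod (Measure.pi fun _ : Fin k => gaussianReal 0 1)).map e.symm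
        = Measure.pi fun _ : Fin (k + 1) => gaussianReal 0 1 := by
      rw [← hP, Measure.map_map e.symm.measurable e.measurable]
      simp
    have hQe : ((gaussianReal (μs 0) 1).prod
          (Measure.pi fun j : Fin k => gaussianReal (μs j.succ) 1)).map e.symm
        = Measure.pi fun i => gaussianReal (μs i) 1 := by
      rw [← hQ, Measure.map_map e.symm.measurable e.measurable]
      simp
    have rpi2prod : Red (Measure.pi fun _ : Fin (k + 1) => gaussianReal 0 1)
        (Measure.pi fun i => gaussianReal (μs i) 1)
        ((gaussianReal 0 1).prod (Measure.pi fun _ : Fin k => gaussianReal 0 1))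
        ((gaussianReal (μs 0) 1).prod (Measure.pi fun j : Fin k => gaussianReal (μs j.succ) 1)) :=
      Red.of_map e.symm.measurable hPe hQe
    have rprod2pi : Red ((gaussianReal 0 1).prod (Measure.pi fun _ : Fin k => gaussianReal 0 1))
        ((gaussianReal (μs 0) 1).prod (Measure.pi fun j : Fin k => gaussianReal (μs j.succ) 1))
        (Measure.pi fun _ : Fin (k + 1) => gaussianReal 0 1)
        (Measure.pi fun i => gaussianReal (μs i) 1) :=
      Red.of_map e.measurable hP hQ
    have comb1 := Red.prod (Red.refl (gaussianReal 0 1) (gaussianReal (μs 0) 1)) ih1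
    have comb2 := Red.prod (Red.refl (gaussianReal 0 1) (gaussianReal (μs 0) 1)) ih2
    obtain ⟨bin1, bin2⟩ := gauss_red_pair (μs 0) ν
    rw [hμtot] at bin1 bin2
    constructor
    · exact (rpi2prod.trans comb1).trans bin1
    · exact bin2.trans (comb2.trans rprod2pi)

end GaussComp


/-- Gaussian composition `G_{μ₁} ⊗ G_{μ₂} = G_{√(μ₁²+μ₂²)}` and its k-fold version. -/
theorem gaussian_composition (μ₁ μ₂ : ℝ) :
    (∀ α ∈ Icc (0:ℝ) 1,
      tradeoff ((gaussianReal 0 1).prod (gaussianReal 0 1))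
               ((gaussianReal μ₁ 1).prod (gaussianReal μ₂ 1)) α =
      tradeoff (gaussianReal 0 1) (gaussianReal (Real.sqrt (μ₁ ^ 2 + μ₂ ^ 2)) 1) α) ∧
    (∀ (k : ℕ) (μs : Fin k → ℝ), ∀ α ∈ Icc (0:ℝ) 1,
      tradeoff (Measure.pi fun _ : Fin k => gaussianReal 0 1)
               (Measure.pi fun i => gaussianReal (μs i) 1) α =
      tradeoff (gaussianReal 0 1) (gaussianReal (Real.sqrt (∑ i, (μs i) ^ 2)) 1) α) := by
  constructor
  · intro α hα
    obtain ⟨r1, r2⟩ := GaussComp.gauss_red_pair μ₁ μ₂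
    exact le_antisymm (GaussComp.tradeoff_le_of_red r2 hα.1)
      (GaussComp.tradeoff_le_of_red r1 hα.1)
  · intro k μs α hα
    obtain ⟨r1, r2⟩ := GaussComp.gauss_red_pi k μs
    exact le_antisymm (GaussComp.tradeoff_le_of_red r2 hα.1)
      (GaussComp.tradeoff_le_of_red r1 hα.1)
end

section
/- For a symmetric trade-off function f with f(0) = 1, writing D_f(x) := -f'(1-x) (defined almost everywhere since f is convex), the functional identity ∫₀¹ D_f(x) log D_f(x) dx = -∫₀¹ log D_f(x) dx holds; i.e., ν̃₁(f) = ν₁(f). -/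
/-!
Symmetry `tfInv f = f` together with `f 0 = 1` makes `f` an involution of `[0, 1]`, so `f` is a
strictly decreasing bijection of `(0, 1)` and, wherever it is differentiable,
`f' (f x) = 1 / f' x`. Substituting `y = f x` in `∫ log |f' y| dy` therefore gives
`∫ |f' x| log |f' (f x)| dx = -∫ |f' x| log |f' x| dx`, and reflecting `x ↦ 1 - x` turns the
left-hand side of the theorem into `∫ |f'| log |f'|`.
-/

open MeasureTheory ProbabilityTheory Set Filter

lemma AntitoneOn.ae_differentiableAt_of_mem {f : ℝ → ℝ} {s : Set ℝ} (hf : AntitoneOn f s)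
    (hs : IsOpen s) : ∀ᵐ x, x ∈ s → DifferentiableAt ℝ f x := by
  have hneg : MonotoneOn (-f) s := fun a ha b hb hab => neg_le_neg (hf ha hb hab)
  filter_upwards [hneg.ae_differentiableWithinAt_of_mem] with x hx hxs
  simpa using ((hx hxs).differentiableAt (hs.mem_nhds hxs)).neg

lemma AntitoneOn.Ioc_ae_eq_inter_differentiableAt {f : ℝ → ℝ} {a b : ℝ}
    (hf : AntitoneOn f (Ioo a b)) :
    (Ioc a b : Set ℝ) =ᵐ[volume] (Ioo a b ∩ {x | DifferentiableAt ℝ f x} : Set ℝ) := by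
  refine Ioo_ae_eq_Ioc.symm.trans (eventuallyEq_set.2 ?_)
  filter_upwards [hf.ae_differentiableAt_of_mem isOpen_Ioo] with x hx
    using ⟨fun h => ⟨h, hx h⟩, And.left⟩

theorem integral_log_abs_deriv_of_bijOn_self {f f' : ℝ → ℝ} {s : Set ℝ} (hs : MeasurableSet s)
    (hbij : BijOn f s s) (hf' : ∀ x ∈ s, HasDerivWithinAt f (f' x) s x)
    (hinv' : ∀ x ∈ s, f' (f x) = (f' x)⁻¹) :
    ∫ x in s, Real.log |f' x| = -∫ x in s, |f' x| * Real.log |f' x| := by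
  calc ∫ x in s, Real.log |f' x| = ∫ x in f '' s, Real.log |f' x| := by rw [hbij.image_eq]
    _ = ∫ x in s, |f' x| • Real.log |f' (f x)| :=
        integral_image_eq_integral_abs_deriv_smul hs hf' hbij.injOn _
    _ = ∫ x in s, -(|f' x| * Real.log |f' x|) := setIntegral_congr_fun hs fun x hx => by
        rw [hinv' x hx, abs_inv, Real.log_inv, smul_eq_mul, mul_neg]
    _ = -∫ x in s, |f' x| * Real.log |f' x| := integral_neg _

lemma lt_apply_of_lt_tfInv {f : ℝ → ℝ} {α β : ℝ} (hα : α ∈ Icc 0 1) (hlt : α < tfInv f β) :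
    β < f α := by
  by_contra! h
  exact hlt.not_ge (csInf_le ⟨0, fun _ h => h.1.1⟩ ⟨hα, h⟩)

namespace IsTradeoffFn

variable {f : ℝ → ℝ}

lemma apply_one (hf : IsTradeoffFn f) : f 1 = 0 := by
  obtain ⟨⟨h0, -⟩, h1⟩ := hf.2.2.2 1 (right_mem_Icc.2 zero_le_one)
  linarith

lemma tfInv_mem (hf : IsTradeoffFn f) {β : ℝ} (hβ : 0 ≤ β) :
    tfInv f β ∈ Icc 0 1 ∧ f (tfInv f β) ≤ β :=
  (hf.2.1.preimage_isClosed_of_isClosed isClosed_Icc isClosed_Iic).csInf_mem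
    ⟨1, right_mem_Icc.2 zero_le_one, hf.apply_one.trans_le hβ⟩ ⟨0, fun _ h => h.1.1⟩

lemma apply_tfInv (hf : IsTradeoffFn f) (h0 : f 0 = 1) {β : ℝ} (hβ : β ∈ Icc 0 1) :
    f (tfInv f β) = β := by
  obtain ⟨hmem, hle⟩ := hf.tfInv_mem hβ.1
  refine le_antisymm hle ?_
  rcases hmem.1.eq_or_lt with h | hpos
  · rw [← h, h0]
    exact hβ.2
  · have hcl : tfInv f β ∈ closure (Ico 0 (tfInv f β)) := by
      rw [closure_Ico hpos.ne]
      exact right_mem_Icc.2 hpos.le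
    have hmaps : MapsTo f (Ico 0 (tfInv f β)) (Ici β) := fun α hα =>
      (lt_apply_of_lt_tfInv ⟨hα.1, hα.2.le.trans hmem.2⟩ hα.2).le
    have hcont : ContinuousWithinAt f (Ico 0 (tfInv f β)) (tfInv f β) :=
      (hf.2.1 _ hmem).mono (Ico_subset_Icc_self.trans (Icc_subset_Icc_right hmem.2))
    simpa using hcont.mem_closure hcl hmaps

lemma leftInvOn_of_tfInv_eq (hf : IsTradeoffFn f) (hsym : ∀ β ∈ Icc (0:ℝ) 1, tfInv f β = f β)
    (h0 : f 0 = 1) : LeftInvOn f f (Icc 0 1) := fun β hβ => by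
  simpa only [hsym β hβ] using hf.apply_tfInv h0 hβ

lemma deriv_neg (hf : IsTradeoffFn f) {x : ℝ} (hx : x ∈ Ico 0 1) (hfx : 0 < f x)
    (hd : DifferentiableAt ℝ f x) : deriv f x < 0 := by
  refine (hf.1.deriv_le_slope (Ico_subset_Icc_self hx) (right_mem_Icc.2 zero_le_one) hx.2
    hd).trans_lt ?_
  rw [slope_def_field, hf.apply_one]
  exact div_neg_of_neg_of_pos (by linarith) (by linarith [hx.2])

section Involution

variable (hf : IsTradeoffFn f) (hinv : LeftInvOn f f (Icc 0 1))
include hf hinv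

lemma mapsTo_Ioo : MapsTo f (Ioo 0 1) (Ioo 0 1) := fun x hx => by
  have hsa : StrictAntiOn f (Icc 0 1) := hf.2.2.1.strictAntiOn_of_injOn hinv.injOn
  have h0 : f 0 = 1 := by simpa [hf.apply_one] using hinv (right_mem_Icc.2 zero_le_one)
  have hx' : x ∈ Icc 0 1 := Ioo_subset_Icc_self hx
  constructor
  · simpa [hf.apply_one] using hsa hx' (right_mem_Icc.2 zero_le_one) hx.2
  · simpa [h0] using hsa (left_mem_Icc.2 zero_le_one) hx' hx.1

lemma hasDerivAt_apply {x : ℝ} (hx : x ∈ Ioo 0 1) (hd : DifferentiableAt ℝ f x) :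
    HasDerivAt f (deriv f x)⁻¹ (f x) := by
  have hfx := hf.mapsTo_Ioo hinv hx
  have hda : HasDerivAt f (deriv f x) (f (f x)) := by
    rw [hinv (Ioo_subset_Icc_self hx)]
    exact hd.hasDerivAt
  refine hda.of_local_left_inverse (hf.2.1.continuousAt (Icc_mem_nhds hfx.1 hfx.2))
    (hf.deriv_neg (Ioo_subset_Ico_self hx) hfx.1 hd).ne ?_
  filter_upwards [Ioo_mem_nhds hfx.1 hfx.2] with y hy using hinv (Ioo_subset_Icc_self hy)

lemma bijOn_differentiableAt :
    BijOn f (Ioo 0 1 ∩ {x | DifferentiableAt ℝ f x}) (Ioo 0 1 ∩ {x | DifferentiableAt ℝ f x}) :=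
  have hmaps : MapsTo f (Ioo 0 1 ∩ {x | DifferentiableAt ℝ f x})
      (Ioo 0 1 ∩ {x | DifferentiableAt ℝ f x}) := fun _ hx =>
    ⟨hf.mapsTo_Ioo hinv hx.1, (hf.hasDerivAt_apply hinv hx.1 hx.2).differentiableAt⟩
  have hinv' : LeftInvOn f f (Ioo 0 1 ∩ {x | DifferentiableAt ℝ f x}) := fun _ hx =>
    hinv (Ioo_subset_Icc_self hx.1)
  InvOn.bijOn ⟨hinv', hinv'⟩ hmaps hmaps

end Involution

end IsTradeoffFn

theorem nu1_tilde_eq_nu1_general (f : ℝ → ℝ) (hf : IsTradeoffFn f)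
    (hsym : ∀ β ∈ Icc (0:ℝ) 1, tfInv f β = f β) (h0 : f 0 = 1) :
    (∫ x in (0:ℝ)..1, (-deriv f (1 - x)) * Real.log (-deriv f (1 - x))) =
      -∫ x in (0:ℝ)..1, Real.log |deriv f x| := by
  have hinv := hf.leftInvOn_of_tfInv_eq hsym h0
  set s := Ioo (0:ℝ) 1 ∩ {x | DifferentiableAt ℝ f x}
  have hs : MeasurableSet s := measurableSet_Ioo.inter (measurableSet_of_differentiableAt ℝ f)
  have hIoc : Ioc (0:ℝ) 1 =ᵐ[volume] s :=
    (hf.2.2.1.mono Ioo_subset_Icc_self).Ioc_ae_eq_inter_differentiableAt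
  have hderiv_abs : ∀ x ∈ s, -deriv f x = |deriv f x| := fun x hx =>
    (abs_of_neg (hf.deriv_neg (Ioo_subset_Ico_self hx.1) (hf.mapsTo_Ioo hinv hx.1).1 hx.2)).symm
  calc ∫ x in (0:ℝ)..1, (-deriv f (1 - x)) * Real.log (-deriv f (1 - x))
      = ∫ x in (0:ℝ)..1, (-deriv f x) * Real.log (-deriv f x) := by
        simpa using intervalIntegral.integral_comp_sub_left (a := 0) (b := 1)
          (fun u => (-deriv f u) * Real.log (-deriv f u)) (1:ℝ)
    _ = ∫ x in s, |deriv f x| * Real.log |deriv f x| := by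
        rw [intervalIntegral.integral_of_le zero_le_one, setIntegral_congr_set hIoc]
        exact setIntegral_congr_fun hs fun x hx => by rw [hderiv_abs x hx]
    _ = -∫ x in s, Real.log |deriv f x| := by
        rw [integral_log_abs_deriv_of_bijOn_self hs (hf.bijOn_differentiableAt hinv)
          (fun x hx => hx.2.hasDerivAt.hasDerivWithinAt)
          (fun x hx => (hf.hasDerivAt_apply hinv hx.1 hx.2).deriv), neg_neg]
    _ = -∫ x in (0:ℝ)..1, Real.log |deriv f x| := by
        rw [intervalIntegral.integral_of_le zero_le_one, setIntegral_congr_set hIoc]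

/-- for a symmetric trade-off function `f` with `f 0 = 1`,
`∫₀¹ D_f(x) log D_f(x) dx = -∫₀¹ log|f'(x)| dx`, i.e. `ν̃₁(f) = ν₁(f)`. -/
theorem nu1_tilde_eq_nu1 (f : ℝ → ℝ) (hf : IsTradeoffFn f)
    (hsym : ∀ β ∈ Icc (0:ℝ) 1, tfInv f β = f β) (h0 : f 0 = 1)
    (hi1 : IntervalIntegrable (fun x => Real.log |deriv f x|) volume 0 1)
    (hi2 : IntervalIntegrable
      (fun x => (-deriv f (1 - x)) * Real.log (-deriv f (1 - x))) volume 0 1) :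
    (∫ x in (0:ℝ)..1, (-deriv f (1 - x)) * Real.log (-deriv f (1 - x))) =
      -∫ x in (0:ℝ)..1, Real.log |deriv f x| :=
  nu1_tilde_eq_nu1_general f hf hsym h0
end

section
/- KL-divergence functional: if f = T(P,Q) is the trade-off function of distributions P and Q with P absolutely continuous with respect to Q (and the trade-off function differentiable a.e.), then ν₁(f) := -∫₀¹ log|f'(x)| dx equals the Kullback–Leibler divergence D_KL(P‖Q). In particular ν₁(f) ≥ 0, with nonnegativity following from Jensen's inequality. -/
open MeasureTheory ProbabilityTheory Set Filter

open scoped Topology ENNReal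
set_option linter.unusedSectionVars false
set_option maxHeartbeats 1000000

namespace Nu1Aux

variable {Ω : Type*} [MeasurableSpace Ω] (P Q : Measure Ω)

noncomputable def Rf (ω : Ω) : ℝ := (P.rnDeriv Q ω).toReal

lemma measurable_Rf : Measurable (Rf P Q) := (Measure.measurable_rnDeriv P Q).ennreal_toReal

lemma Rf_nonneg (ω : Ω) : 0 ≤ Rf P Q ω := ENNReal.toReal_nonneg

noncomputable def lawR : Measure ℝ := P.map (Rf P Q)

instance [IsProbabilityMeasure P] : IsProbabilityMeasure (lawR P Q) :=
  Measure.isProbabilityMeasure_map (measurable_Rf P Q).aemeasurable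

noncomputable def Fc (t : ℝ) : ℝ := cdf (lawR P Q) t

noncomputable def cq (x : ℝ) : ℝ := sInf {t : ℝ | x ≤ Fc P Q t}

lemma lawR_Iic (t : ℝ) : lawR P Q (Iic t) = P {ω | Rf P Q ω ≤ t} := by
  rw [lawR, Measure.map_apply (measurable_Rf P Q) measurableSet_Iic]; rfl

variable [IsProbabilityMeasure P] [IsProbabilityMeasure Q]

lemma Fc_eq (t : ℝ) : Fc P Q t = (P {ω | Rf P Q ω ≤ t}).toReal := by
  rw [Fc, cdf_eq_real, measureReal_def, lawR_Iic]

lemma ofReal_Fc (t : ℝ) : ENNReal.ofReal (Fc P Q t) = P {ω | Rf P Q ω ≤ t} := by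
  rw [Fc, ofReal_cdf, lawR_Iic]

lemma Fc_mono : Monotone (Fc P Q) := monotone_cdf _

lemma Fc_nonneg (t : ℝ) : 0 ≤ Fc P Q t := cdf_nonneg _ t

lemma Fc_le_one (t : ℝ) : Fc P Q t ≤ 1 := cdf_le_one _ t

lemma Fc_of_neg {t : ℝ} (ht : t < 0) : Fc P Q t = 0 := by
  have h : {ω | Rf P Q ω ≤ t} = (∅ : Set Ω) := by
    ext ω; simp only [mem_setOf_eq, mem_empty_iff_false, iff_false, not_le]
    exact lt_of_lt_of_le ht (Rf_nonneg P Q ω)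
  rw [Fc_eq, h]; simp

variable {P Q}

lemma P_Rf_zero (hac : P ≪ Q) : P {ω | Rf P Q ω ≤ 0} = 0 := by
  have h1 : ∀ᵐ ω ∂P, 0 < P.rnDeriv Q ω := Measure.rnDeriv_pos hac
  have h2 : ∀ᵐ ω ∂P, P.rnDeriv Q ω < ⊤ :=
    (Measure.rnDeriv_lt_top P Q).filter_mono hac.ae_le
  have h3 : ∀ᵐ ω ∂P, 0 < Rf P Q ω := by
    filter_upwards [h1, h2] with ω hω1 hω2
    exact ENNReal.toReal_pos hω1.ne' hω2.ne
  rw [ae_iff] at h3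
  convert h3 using 2
  ext ω; simp [not_lt]

lemma Fc_zero (hac : P ≪ Q) : Fc P Q 0 = 0 := by
  rw [Fc_eq, P_Rf_zero hac]; simp

lemma Sx_nonempty {x : ℝ} (hx1 : x < 1) : {t : ℝ | x ≤ Fc P Q t}.Nonempty := by
  have h := (tendsto_cdf_atTop (lawR P Q)).eventually (eventually_ge_nhds hx1)
  obtain ⟨t, ht⟩ := h.exists
  exact ⟨t, ht⟩

lemma Sx_bddBelow {x : ℝ} (hx0 : 0 < x) : BddBelow {t : ℝ | x ≤ Fc P Q t} := by
  refine ⟨0, fun t ht => ?_⟩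
  by_contra h
  push_neg at h
  have := Fc_of_neg P Q h
  rw [mem_setOf_eq, this] at ht
  linarith

lemma le_Fc_cq {x : ℝ} (hx0 : 0 < x) (hx1 : x < 1) : x ≤ Fc P Q (cq P Q x) := by
  have hrc : Tendsto (Fc P Q) (𝓝[>] (cq P Q x)) (𝓝 (Fc P Q (cq P Q x))) :=
    ((cdf (lawR P Q)).right_continuous (cq P Q x)).tendsto.mono_left
      (nhdsWithin_mono _ Ioi_subset_Ici_self)
  refine ge_of_tendsto hrc ?_
  refine eventually_nhdsWithin_of_forall fun u hu => ?_
  obtain ⟨t, ht, htu⟩ := exists_lt_of_csInf_lt (Sx_nonempty hx1) hu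
  exact le_trans ht (Fc_mono P Q htu.le)

lemma cq_le_iff {x a : ℝ} (hx0 : 0 < x) (hx1 : x < 1) :
    cq P Q x ≤ a ↔ x ≤ Fc P Q a := by
  constructor
  · intro h
    exact le_trans (le_Fc_cq hx0 hx1) (Fc_mono P Q h)
  · intro h
    rw [cq]; exact csInf_le (Sx_bddBelow hx0) h

lemma cq_pos (hac : P ≪ Q) {x : ℝ} (hx0 : 0 < x) (hx1 : x < 1) : 0 < cq P Q x := by
  by_contra h
  push_neg at h
  have := (cq_le_iff hx0 hx1).mp h
  rw [Fc_zero hac] at this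
  linarith

lemma x_le_P_le {x : ℝ} (hx0 : 0 < x) (hx1 : x < 1) :
    x ≤ (P {ω | Rf P Q ω ≤ cq P Q x}).toReal := by
  have := le_Fc_cq (P := P) (Q := Q) hx0 hx1
  rwa [Fc_eq] at this

lemma P_lt_le_x {x : ℝ} (hx0 : 0 < x) (hx1 : x < 1) :
    (P {ω | Rf P Q ω < cq P Q x}).toReal ≤ x := by
  set c := cq P Q x with hc
  have hU : {ω | Rf P Q ω < c} = ⋃ n : ℕ, {ω | Rf P Q ω ≤ c - ((n : ℝ) + 1)⁻¹} := by
    ext ω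
    simp only [mem_setOf_eq, mem_iUnion]
    constructor
    · intro h
      obtain ⟨n, hn⟩ := exists_nat_one_div_lt (sub_pos.mpr h)
      refine ⟨n, ?_⟩
      rw [one_div] at hn
      linarith
    · rintro ⟨n, hn⟩
      have : (0:ℝ) < ((n : ℝ) + 1)⁻¹ := by positivity
      linarith
  have hmono : Monotone fun n : ℕ => {ω | Rf P Q ω ≤ c - ((n : ℝ) + 1)⁻¹} := by
    intro m n hmn ω hω
    simp only [mem_setOf_eq] at *
    have hmn' : ((n : ℝ) + 1)⁻¹ ≤ ((m : ℝ) + 1)⁻¹ := by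
      apply inv_anti₀ (by positivity)
      exact_mod_cast by exact_mod_cast add_le_add_left (Nat.cast_le.mpr hmn) 1
    linarith
  have htend : Tendsto (fun n : ℕ => P {ω | Rf P Q ω ≤ c - ((n : ℝ) + 1)⁻¹}) atTop
      (𝓝 (P {ω | Rf P Q ω < c})) := by
    rw [hU]
    exact tendsto_measure_iUnion_atTop hmono
  have hbound : ∀ n : ℕ, P {ω | Rf P Q ω ≤ c - ((n : ℝ) + 1)⁻¹} ≤ ENNReal.ofReal x := by
    intro n
    have hlt : c - ((n : ℝ) + 1)⁻¹ < c := by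
      have : (0:ℝ) < ((n : ℝ) + 1)⁻¹ := by positivity
      linarith
    have hnotin : ¬ (x ≤ Fc P Q (c - ((n : ℝ) + 1)⁻¹)) := by
      intro hmem
      have h2 : c ≤ c - ((n : ℝ) + 1)⁻¹ := by
        rw [hc, cq]; exact csInf_le (Sx_bddBelow hx0) hmem
      linarith
    push_neg at hnotin
    rw [Fc_eq] at hnotin
    rw [← ofReal_Fc, Fc_eq]
    exact ENNReal.ofReal_le_ofReal hnotin.le
  have hlim : P {ω | Rf P Q ω < c} ≤ ENNReal.ofReal x :=
    le_of_tendsto htend (Eventually.of_forall hbound)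
  calc (P {ω | Rf P Q ω < c}).toReal ≤ (ENNReal.ofReal x).toReal :=
        ENNReal.toReal_mono ENNReal.ofReal_ne_top hlim
    _ = x := ENNReal.toReal_ofReal hx0.le

section Tradeoff

variable (hac : P ≪ Q)

lemma integrable_of_range {φ : Ω → ℝ} (hφm : Measurable φ)
    (hφr : ∀ ω, φ ω ∈ Icc (0:ℝ) 1) (μ : Measure Ω) [IsProbabilityMeasure μ] :
    Integrable φ μ := by
  refine (integrable_const (1:ℝ)).mono' hφm.aestronglyMeasurable ?_
  refine Eventually.of_forall fun ω => ?_
  rw [Real.norm_eq_abs, abs_le]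
  exact ⟨by linarith [(hφr ω).1], (hφr ω).2⟩

lemma integrable_Rf : Integrable (Rf P Q) Q := Measure.integrable_toReal_rnDeriv

lemma integrable_one_sub (s : ℝ) : Integrable (fun ω => 1 - s * Rf P Q ω) Q :=
  (integrable_const 1).sub ((integrable_Rf (P := P) (Q := Q)).const_mul s)

lemma integrable_maxpart (s : ℝ) : Integrable (fun ω => max 0 (1 - s * Rf P Q ω)) Q := by
  have h := (integrable_one_sub (P := P) (Q := Q) s).pos_part
  simpa [max_comm] using h

include hac in
lemma expand_int {φ : Ω → ℝ} (hφm : Measurable φ)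
    (hφr : ∀ ω, φ ω ∈ Icc (0:ℝ) 1) (s : ℝ) :
    ∫ ω, φ ω * (1 - s * Rf P Q ω) ∂Q = (∫ ω, φ ω ∂Q) - s * ∫ ω, φ ω ∂P := by
  have hbd : ∃ C, ∀ ω, ‖φ ω‖ ≤ C := ⟨1, fun ω => by
    rw [Real.norm_eq_abs, abs_le]; exact ⟨by linarith [(hφr ω).1], (hφr ω).2⟩⟩
  have hRφ : Integrable (fun ω => φ ω * Rf P Q ω) Q :=
    (integrable_Rf (P := P) (Q := Q)).bdd_mul hφm.aestronglyMeasurable (Eventually.of_forall hbd.choose_spec)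
  have h1 : (fun ω => φ ω * (1 - s * Rf P Q ω))
      = fun ω => φ ω - s * (φ ω * Rf P Q ω) := by
    funext ω; ring
  rw [h1, integral_sub (integrable_of_range hφm hφr Q) (hRφ.const_mul s),
    integral_const_mul]
  have h2 : ∫ ω, φ ω * Rf P Q ω ∂Q = ∫ ω, φ ω ∂P := by
    rw [show (fun ω => φ ω * Rf P Q ω) = fun ω => (P.rnDeriv Q ω).toReal • φ ω from
      funext fun ω => by rw [smul_eq_mul, mul_comm]; rfl]
    exact MeasureTheory.integral_rnDeriv_smul hac
  rw [h2]

include hac in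
lemma tradeoff_ge_aux {s : ℝ} (hs : 0 < s) {α : ℝ} (hα : α ∈ Icc (0:ℝ) 1) :
    1 - s * α - ∫ ω, max 0 (1 - s * Rf P Q ω) ∂Q ≤ tradeoff P Q α := by
  rw [tradeoff]
  refine le_csInf ⟨1, fun _ => 0, measurable_const,
      fun ω => ⟨le_refl 0, zero_le_one⟩, by simpa using hα.1, by simp⟩ ?_
  rintro β ⟨φ, hφm, hφr, hφP, rfl⟩
  have hkey : ∫ ω, φ ω * (1 - s * Rf P Q ω) ∂Q ≤ ∫ ω, max 0 (1 - s * Rf P Q ω) ∂Q := by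
    refine integral_mono ((integrable_one_sub (P := P) (Q := Q) s).bdd_mul
      hφm.aestronglyMeasurable (Eventually.of_forall fun ω => by
        rw [Real.norm_eq_abs, abs_le]; exact ⟨by linarith [(hφr ω).1], (hφr ω).2⟩))
      (integrable_maxpart (P := P) (Q := Q) s) fun ω => ?_
    rcases le_or_gt 0 (1 - s * Rf P Q ω) with h | h
    · exact le_trans (mul_le_of_le_one_left h (hφr ω).2) (le_max_right _ _)
    · exact le_trans (mul_nonpos_of_nonneg_of_nonpos (hφr ω).1 h.le) (le_max_left _ _)
  rw [expand_int hac hφm hφr s] at hkey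
  have : s * ∫ ω, φ ω ∂P ≤ s * α := mul_le_mul_of_nonneg_left hφP hs.le
  linarith

include hac in
lemma tradeoff_le_aux {x : ℝ} (hx : x ∈ Ioo (0:ℝ) 1) :
    tradeoff P Q x ≤
      1 - (cq P Q x)⁻¹ * x - ∫ ω, max 0 (1 - (cq P Q x)⁻¹ * Rf P Q ω) ∂Q := by
  obtain ⟨hx0, hx1⟩ := hx
  set c := cq P Q x with hcdef
  have hc : 0 < c := cq_pos hac hx0 hx1
  set s := c⁻¹ with hsdef
  have hs : 0 < s := inv_pos.mpr hc
  set A := {ω | Rf P Q ω < c} with hAdef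
  set B := {ω | Rf P Q ω = c} with hBdef
  have hA : MeasurableSet A := measurableSet_lt (measurable_Rf P Q) measurable_const
  have hB : MeasurableSet B := by
    have := (measurable_Rf P Q) (measurableSet_singleton c)
    exact this
  have hdisj : Disjoint A B := by
    rw [Set.disjoint_left]
    intro ω hωA hωB
    rw [hAdef, mem_setOf_eq] at hωA
    rw [hBdef, mem_setOf_eq] at hωB
    exact absurd hωB hωA.ne
  set pl := (P A).toReal with hpl
  set pe := (P B).toReal with hpe
  have hple : pl ≤ x := P_lt_le_x hx0 hx1
  have hunion : {ω | Rf P Q ω ≤ c} = A ∪ B := by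
    ext ω; simp only [hAdef, hBdef, mem_setOf_eq, mem_union]
    exact le_iff_lt_or_eq
  have hxle : x ≤ pl + pe := by
    have h1 := x_le_P_le (P := P) (Q := Q) hx0 hx1
    rw [← hcdef, hunion, measure_union hdisj hB] at h1
    rwa [ENNReal.toReal_add (measure_ne_top P A) (measure_ne_top P B)] at h1
  set θ := (x - pl) / pe with hθdef
  have hθ0 : 0 ≤ θ := div_nonneg (by linarith) ENNReal.toReal_nonneg
  have hpe0 : 0 ≤ pe := hpe ▸ ENNReal.toReal_nonneg
  have hθ1 : θ ≤ 1 := by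
    by_cases h : pe = 0
    · rw [hθdef, h, div_zero]; exact zero_le_one
    · rw [hθdef, div_le_one (lt_of_le_of_ne hpe0 (Ne.symm h))]; linarith
  set φ := fun ω => A.indicator (fun _ => (1:ℝ)) ω + B.indicator (fun _ => θ) ω with hφdef
  have hφm : Measurable φ :=
    (measurable_const.indicator hA).add (measurable_const.indicator hB)
  have hφr : ∀ ω, φ ω ∈ Icc (0:ℝ) 1 := by
    intro ω
    by_cases hωA : ω ∈ A
    · have hωB : ω ∉ B := fun hωB => (Set.disjoint_left.mp hdisj hωA) hωB
      simp [hφdef, indicator_of_mem hωA, indicator_of_notMem hωB]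
    · by_cases hωB : ω ∈ B
      · simp [hφdef, indicator_of_notMem hωA, indicator_of_mem hωB, hθ0, hθ1]
      · simp [hφdef, indicator_of_notMem hωA, indicator_of_notMem hωB]
  have hintφ : ∀ (μ : Measure Ω) (_ : IsFiniteMeasure μ),
      ∫ ω, φ ω ∂μ = (μ A).toReal + (μ B).toReal * θ := by
    intro μ hμ
    haveI := hμ
    rw [hφdef, integral_add ((integrable_const (1:ℝ)).indicator hA)
      ((integrable_const θ).indicator hB), integral_indicator_const _ hA,
      integral_indicator_const _ hB, smul_eq_mul, smul_eq_mul, mul_one, measureReal_def, measureReal_def]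
  have hEP : ∫ ω, φ ω ∂P = x := by
    rw [hintφ P inferInstance, ← hpl, ← hpe]
    by_cases h : pe = 0
    · have hplx : pl = x := le_antisymm hple (by rw [h] at hxle; linarith)
      rw [h, hplx]; ring
    · rw [hθdef, mul_div_cancel₀ _ h]; ring
  have hpoint : ∀ ω, max 0 (1 - s * Rf P Q ω) = φ ω * (1 - s * Rf P Q ω) := by
    intro ω
    rcases lt_trichotomy (Rf P Q ω) c with h | h | h
    · have hωA : ω ∈ A := h
      have hωB : ω ∉ B := fun hωB => (Set.disjoint_left.mp hdisj hωA) hωB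
      have hpos : 0 ≤ 1 - s * Rf P Q ω := by
        have : s * Rf P Q ω < s * c := mul_lt_mul_of_pos_left h hs
        rw [hsdef, inv_mul_cancel₀ hc.ne'] at this
        linarith
      simp [hφdef, indicator_of_mem hωA, indicator_of_notMem hωB, max_eq_right hpos]
    · have hzero : 1 - s * Rf P Q ω = 0 := by
        rw [h, hsdef, inv_mul_cancel₀ hc.ne']; ring
      rw [hzero]; simp
    · have hωA : ω ∉ A := by rw [hAdef, mem_setOf_eq]; exact not_lt.mpr h.le
      have hωB : ω ∉ B := by rw [hBdef, mem_setOf_eq]; exact h.ne'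
      have hneg : 1 - s * Rf P Q ω < 0 := by
        have : s * c < s * Rf P Q ω := mul_lt_mul_of_pos_left h hs
        rw [hsdef, inv_mul_cancel₀ hc.ne'] at this
        linarith
      simp [hφdef, indicator_of_notMem hωA, indicator_of_notMem hωB, max_eq_left hneg.le]
  have hM : ∫ ω, max 0 (1 - s * Rf P Q ω) ∂Q = (∫ ω, φ ω ∂Q) - s * x := by
    have h1 : ∫ ω, max 0 (1 - s * Rf P Q ω) ∂Q = ∫ ω, φ ω * (1 - s * Rf P Q ω) ∂Q := by
      congr 1; funext ω; exact hpoint ω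
    rw [h1, expand_int hac hφm hφr s, hEP]
  have hmem : (1 - ∫ ω, φ ω ∂Q) ∈ { β | ∃ ψ : Ω → ℝ, Measurable ψ ∧
      (∀ y, ψ y ∈ Icc (0:ℝ) 1) ∧ (∫ y, ψ y ∂P) ≤ x ∧ β = 1 - ∫ y, ψ y ∂Q } :=
    ⟨φ, hφm, hφr, le_of_eq hEP, rfl⟩
  have hbdd : BddBelow { β | ∃ ψ : Ω → ℝ, Measurable ψ ∧
      (∀ y, ψ y ∈ Icc (0:ℝ) 1) ∧ (∫ y, ψ y ∂P) ≤ x ∧ β = 1 - ∫ y, ψ y ∂Q } := by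
    refine ⟨0, ?_⟩
    rintro β ⟨ψ, hψm, hψr, hψP, rfl⟩
    have : ∫ y, ψ y ∂Q ≤ ∫ _, (1:ℝ) ∂Q :=
      integral_mono (integrable_of_range hψm hψr Q) (integrable_const 1)
        fun ω => (hψr ω).2
    simp only [integral_const, probReal_univ, smul_eq_mul,
      one_mul] at this
    linarith
  have hle := csInf_le hbdd hmem
  rw [tradeoff, hM]
  linarith

include hac in
lemma subgrad {x : ℝ} (hx : x ∈ Ioo (0:ℝ) 1) {α : ℝ} (hα : α ∈ Icc (0:ℝ) 1) :
    tradeoff P Q x - (cq P Q x)⁻¹ * (α - x) ≤ tradeoff P Q α := by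
  have h1 := tradeoff_ge_aux hac (inv_pos.mpr (cq_pos hac hx.1 hx.2)) hα
  have h2 := tradeoff_le_aux hac hx
  have h3 : (cq P Q x)⁻¹ * (α - x) = (cq P Q x)⁻¹ * α - (cq P Q x)⁻¹ * x := by ring
  linarith

include hac in
lemma deriv_tradeoff {x : ℝ} (hx : x ∈ Ioo (0:ℝ) 1)
    (hd : DifferentiableAt ℝ (tradeoff P Q) x) :
    deriv (tradeoff P Q) x = -(cq P Q x)⁻¹ := by
  set s := (cq P Q x)⁻¹ with hsdef
  set f := tradeoff P Q with hfdef
  have hg : HasDerivAt (fun α => f x - s * (α - x)) (-s) x := by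
    have h1 : HasDerivAt (fun α : ℝ => s * (α - x)) s x := by
      simpa using (((hasDerivAt_id x).sub_const x).const_mul s)
    have h2 := (hasDerivAt_const x (f x)).sub h1
    rwa [zero_sub] at h2
  have hmin : IsLocalMin (fun α => f α - (f x - s * (α - x))) x := by
    have hev : ∀ᶠ α in 𝓝 x, f x - s * (α - x) ≤ f α := by
      filter_upwards [Icc_mem_nhds hx.1 hx.2] with α hα
      exact subgrad hac hx hα
    refine hev.mono fun α hα => ?_
    simp only [sub_self, mul_zero, sub_zero]
    linarith
  have h0 : deriv (fun α => f α - (f x - s * (α - x))) x = 0 := hmin.deriv_eq_zero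
  rw [show (fun α => f α - (f x - s * (α - x))) = f - (fun α => f x - s * (α - x)) from rfl,
    deriv_sub hd hg.differentiableAt, hg.deriv] at h0
  linarith

end Tradeoff

section Push

noncomputable def cqI (P' Q' : Measure Ω) : ℝ → ℝ := (Ioo (0:ℝ) 1).indicator (cq P' Q')

lemma preim_empty (hac : P ≪ Q) {a : ℝ} (ha : a < 0) : cqI P Q ⁻¹' Iic a = ∅ := by
  ext y
  simp only [mem_preimage, mem_Iic, mem_empty_iff_false, iff_false, not_le]
  by_cases hy : y ∈ Ioo (0:ℝ) 1
  · rw [cqI, indicator_of_mem hy]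
    exact lt_trans ha (cq_pos hac hy.1 hy.2)
  · rw [cqI, indicator_of_notMem hy]
    exact ha

lemma preim_ge {a : ℝ} (ha : 0 ≤ a) :
    cqI P Q ⁻¹' Iic a = (Ioo (0:ℝ) 1 ∩ Iic (Fc P Q a)) ∪ (Ioo (0:ℝ) 1)ᶜ := by
  ext y
  simp only [mem_preimage, mem_Iic, mem_union, mem_inter_iff, mem_compl_iff]
  by_cases hy : y ∈ Ioo (0:ℝ) 1
  · rw [cqI, indicator_of_mem hy]
    constructor
    · intro h
      exact Or.inl ⟨hy, (cq_le_iff hy.1 hy.2).mp h⟩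
    · rintro (⟨-, h⟩ | h)
      · exact (cq_le_iff hy.1 hy.2).mpr h
      · exact absurd hy h
  · rw [cqI, indicator_of_notMem hy]
    simp [hy, ha]

lemma measurable_cqI (hac : P ≪ Q) : Measurable (cqI P Q) := by
  apply measurable_of_Iic
  intro a
  rcases lt_or_ge a 0 with ha | ha
  · rw [preim_empty hac ha]
    exact MeasurableSet.empty
  · rw [preim_ge ha]
    exact ((measurableSet_Ioo.inter measurableSet_Iic).union
      measurableSet_Ioo.compl)

lemma vol_Ioo_inter_Iic {b : ℝ} (hb0 : 0 ≤ b) (hb1 : b ≤ 1) :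
    volume (Ioo (0:ℝ) 1 ∩ Iic b) = ENNReal.ofReal b := by
  apply le_antisymm
  · have hsub : Ioo (0:ℝ) 1 ∩ Iic b ⊆ Icc (0:ℝ) b := by
      rintro y ⟨hy1, hy2⟩
      exact ⟨hy1.1.le, hy2⟩
    refine le_trans (measure_mono hsub) ?_
    rw [Real.volume_Icc]
    norm_num
  · have hsub : Ioo (0:ℝ) b ⊆ Ioo (0:ℝ) 1 ∩ Iic b := by
      rintro y ⟨hy1, hy2⟩
      exact ⟨⟨hy1, lt_of_lt_of_le hy2 hb1⟩, hy2.le⟩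
    refine le_trans ?_ (measure_mono hsub)
    rw [Real.volume_Ioo]
    norm_num

lemma map_cqI (hac : P ≪ Q) :
    Measure.map (cqI P Q) (volume.restrict (Ioo (0:ℝ) 1)) = lawR P Q := by
  haveI : IsProbabilityMeasure (volume.restrict (Ioo (0:ℝ) 1)) := by
    constructor
    rw [Measure.restrict_apply_univ, Real.volume_Ioo]
    norm_num
  refine Measure.ext_of_Iic _ _ fun a => ?_
  rw [Measure.map_apply (measurable_cqI hac) measurableSet_Iic,
    Measure.restrict_apply ((measurable_cqI hac) measurableSet_Iic)]
  rcases lt_or_ge a 0 with ha | ha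
  · rw [preim_empty hac ha, empty_inter, measure_empty, lawR_Iic]
    refine (measure_mono_null (fun ω (hω : Rf P Q ω ≤ a) => ?_) (P_Rf_zero hac)).symm
    exact le_trans hω ha.le
  · rw [preim_ge ha, union_inter_distrib_right, compl_inter_self, union_empty,
      inter_comm, ← inter_assoc, inter_self, vol_Ioo_inter_Iic (Fc_nonneg P Q a)
      (Fc_le_one P Q a), lawR_Iic, ← ofReal_Fc]

lemma int_log_cq (hac : P ≪ Q) :
    ∫ x in Ioo (0:ℝ) 1, Real.log (cq P Q x) = ∫ ω, Real.log (Rf P Q ω) ∂P := by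
  have h1 : ∫ x in Ioo (0:ℝ) 1, Real.log (cq P Q x)
      = ∫ x in Ioo (0:ℝ) 1, Real.log (cqI P Q x) := by
    refine setIntegral_congr_fun measurableSet_Ioo fun y hy => ?_
    rw [cqI, indicator_of_mem hy]
  rw [h1, ← integral_map (μ := volume.restrict (Ioo (0:ℝ) 1))
      (measurable_cqI hac).aemeasurable Real.measurable_log.aestronglyMeasurable,
    map_cqI hac, lawR,
    integral_map (measurable_Rf P Q).aemeasurable
      Real.measurable_log.aestronglyMeasurable]

lemma kl_nonneg (hac : P ≪ Q) (hkl : Integrable (fun ω => Real.log (Rf P Q ω)) P) :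
    0 ≤ ∫ ω, Real.log (Rf P Q ω) ∂P := by
  have hRpos : ∀ᵐ ω ∂P, 0 < Rf P Q ω := by
    filter_upwards [Measure.rnDeriv_pos hac,
      (Measure.rnDeriv_lt_top P Q).filter_mono hac.ae_le] with ω h1 h2
    exact ENNReal.toReal_pos h1.ne' h2.ne
  have hpt : ∀ᵐ ω ∂P, 1 - Real.log (Rf P Q ω) ≤ (Rf P Q ω)⁻¹ := by
    filter_upwards [hRpos] with ω h
    have h2 := Real.log_le_sub_one_of_pos (inv_pos.mpr h)
    rw [Real.log_inv] at h2
    linarith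
  have hIone : Integrable (fun ω => 1 - Real.log (Rf P Q ω)) P :=
    (integrable_const 1).sub hkl
  have hpw : ∀ ω, P.rnDeriv Q ω * ENNReal.ofReal ((Rf P Q ω)⁻¹) ≤ 1 := by
    intro ω
    have hr : Rf P Q ω = (P.rnDeriv Q ω).toReal := rfl
    rcases eq_or_ne (P.rnDeriv Q ω) ⊤ with h | h
    · rw [hr, h]
      simp
    rcases eq_or_ne (P.rnDeriv Q ω) 0 with h0 | h0
    · rw [h0]
      simp
    · have heq : ENNReal.ofReal ((Rf P Q ω)⁻¹) = (P.rnDeriv Q ω)⁻¹ := by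
        rw [hr, ENNReal.ofReal_inv_of_pos (ENNReal.toReal_pos h0 h),
          ENNReal.ofReal_toReal h]
      rw [heq, ENNReal.mul_inv_cancel h0 h]
  have hlin : ∫⁻ ω, ENNReal.ofReal ((Rf P Q ω)⁻¹) ∂P ≤ 1 := by
    have hmg : Measurable fun ω => ENNReal.ofReal ((Rf P Q ω)⁻¹) :=
      (measurable_Rf P Q).inv.ennreal_ofReal
    have h1 : ∫⁻ ω, ENNReal.ofReal ((Rf P Q ω)⁻¹) ∂P
        = ∫⁻ ω, ((P.rnDeriv Q) * fun ω => ENNReal.ofReal ((Rf P Q ω)⁻¹)) ω ∂Q := by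
      rw [← lintegral_withDensity_eq_lintegral_mul Q (Measure.measurable_rnDeriv P Q) hmg,
        Measure.withDensity_rnDeriv_eq P Q hac]
    rw [h1]
    refine le_trans (lintegral_mono (g := fun _ => (1:ℝ≥0∞)) fun ω => hpw ω) ?_
    simp
  have h4 : ∫ ω, (1 - Real.log (Rf P Q ω)) ∂P
      ≤ ∫ ω, max (1 - Real.log (Rf P Q ω)) 0 ∂P :=
    integral_mono hIone hIone.pos_part fun ω => le_max_left _ _
  have h5 : ∫ ω, max (1 - Real.log (Rf P Q ω)) 0 ∂P
      = (∫⁻ ω, ENNReal.ofReal (1 - Real.log (Rf P Q ω)) ∂P).toReal := by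
    rw [integral_eq_lintegral_of_nonneg_ae
      (f := fun ω => max (1 - Real.log (Rf P Q ω)) 0)
      (Eventually.of_forall fun ω => le_max_right _ _)
      hIone.pos_part.aestronglyMeasurable]
    congr 1
    apply lintegral_congr
    intro ω
    rcases le_total 0 (1 - Real.log (Rf P Q ω)) with h | h
    · rw [max_eq_left h]
    · rw [max_eq_right h, ENNReal.ofReal_of_nonpos h, ENNReal.ofReal_zero]
  have h6 : ∫⁻ ω, ENNReal.ofReal (1 - Real.log (Rf P Q ω)) ∂P
      ≤ ∫⁻ ω, ENNReal.ofReal ((Rf P Q ω)⁻¹) ∂P :=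
    lintegral_mono_ae (hpt.mono fun ω h => ENNReal.ofReal_le_ofReal h)
  have h7 : (∫⁻ ω, ENNReal.ofReal (1 - Real.log (Rf P Q ω)) ∂P).toReal ≤ 1 := by
    have hne : ∫⁻ ω, ENNReal.ofReal ((Rf P Q ω)⁻¹) ∂P ≠ ⊤ :=
      (lt_of_le_of_lt hlin ENNReal.one_lt_top).ne
    calc (∫⁻ ω, ENNReal.ofReal (1 - Real.log (Rf P Q ω)) ∂P).toReal
        ≤ (∫⁻ ω, ENNReal.ofReal ((Rf P Q ω)⁻¹) ∂P).toReal := ENNReal.toReal_mono hne h6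
      _ ≤ (1 : ℝ≥0∞).toReal := ENNReal.toReal_mono ENNReal.one_ne_top hlin
      _ = 1 := by simp
  have h9 : ∫ ω, (1 - Real.log (Rf P Q ω)) ∂P ≤ 1 := le_trans (h5 ▸ h4) h7
  have h8 : ∫ ω, (1 - Real.log (Rf P Q ω)) ∂P = 1 - ∫ ω, Real.log (Rf P Q ω) ∂P := by
    rw [integral_sub (integrable_const 1) hkl]
    simp
  rw [h8] at h9
  linarith

end Push

end Nu1Aux

/-- `ν₁(T(P,Q)) = D_KL(P‖Q)`, and in particular `ν₁(T(P,Q)) ≥ 0`. -/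
theorem nu1_eq_klDiv {Ω : Type*} [MeasurableSpace Ω] (P Q : Measure Ω)
    [IsProbabilityMeasure P] [IsProbabilityMeasure Q] (hac : P ≪ Q)
    (hdiff : ∀ᵐ x ∂(volume.restrict (Icc (0:ℝ) 1)), DifferentiableAt ℝ (tradeoff P Q) x)
    (hi : IntervalIntegrable (fun x => Real.log |deriv (tradeoff P Q) x|) volume 0 1)
    (hkl : Integrable (fun x => Real.log ((P.rnDeriv Q x).toReal)) P) :
    nu1 (tradeoff P Q) = ∫ x, Real.log ((P.rnDeriv Q x).toReal) ∂P ∧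
    0 ≤ nu1 (tradeoff P Q) := by
  have heq : nu1 (tradeoff P Q) = ∫ x, Real.log ((P.rnDeriv Q x).toReal) ∂P := by
    have h0 : nu1 (tradeoff P Q)
        = -∫ x in Set.Ioc (0:ℝ) 1, Real.log |deriv (tradeoff P Q) x| := by
      rw [nu1, intervalIntegral.integral_of_le zero_le_one]
    have h1 : volume.restrict (Ioc (0:ℝ) 1) = volume.restrict (Ioo (0:ℝ) 1) :=
      (Measure.restrict_congr_set Ioo_ae_eq_Ioc).symm
    have hae : ∀ᵐ x ∂(volume.restrict (Ioo (0:ℝ) 1)),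
        Real.log |deriv (tradeoff P Q) x| = -Real.log (Nu1Aux.cq P Q x) := by
      have hdiff' : ∀ᵐ x ∂(volume.restrict (Ioo (0:ℝ) 1)),
          DifferentiableAt ℝ (tradeoff P Q) x :=
        hdiff.filter_mono (ae_mono (Measure.restrict_mono Ioo_subset_Icc_self le_rfl))
      have hmem : ∀ᵐ x ∂(volume.restrict (Ioo (0:ℝ) 1)), x ∈ Ioo (0:ℝ) 1 :=
        ae_restrict_mem measurableSet_Ioo
      filter_upwards [hdiff', hmem] with x hd hx
      rw [Nu1Aux.deriv_tradeoff hac hx hd, abs_neg, abs_inv,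
        abs_of_pos (Nu1Aux.cq_pos hac hx.1 hx.2), Real.log_inv]
    rw [h0, h1, integral_congr_ae hae, integral_neg, neg_neg, Nu1Aux.int_log_cq hac]
    rfl
  refine ⟨heq, ?_⟩
  rw [heq]
  exact Nu1Aux.kl_nonneg hac hkl
end

section
/- Dini-type theorem for monotone functions: let f_n : [a,b] → ℝ be a sequence of non-increasing functions converging pointwise to a continuous function f : [a,b] → ℝ. Then f_n converges to f uniformly on [a,b]. -/
open MeasureTheory ProbabilityTheory Set Filter

/-- Dini-type theorem: a sequence of non-increasing functions converging
pointwise on `[a,b]` to a continuous function converges uniformly. -/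
theorem dini_monotone_functions (a b : ℝ) (hab : a ≤ b) (f : ℕ → ℝ → ℝ) (g : ℝ → ℝ)
    (hmono : ∀ n, AntitoneOn (f n) (Icc a b))
    (hcont : ContinuousOn g (Icc a b))
    (hptw : ∀ x ∈ Icc a b, Tendsto (fun n => f n x) atTop (nhds (g x))) :
    TendstoUniformlyOn f g atTop (Icc a b) := by
  rcases eq_or_lt_of_le hab with rfl | hab'
  · rw [Metric.tendstoUniformlyOn_iff]
    intro ε hε
    have h := hptw a (left_mem_Icc.mpr le_rfl)
    filter_upwards [h (Metric.ball_mem_nhds _ hε)] with n hn x hx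
    have hxa : x = a := by
      rw [Icc_self] at hx; exact hx
    subst hxa
    rw [dist_comm]
    exact Metric.mem_ball.mp hn
  · rw [Metric.tendstoUniformlyOn_iff]
    intro ε hε
    obtain ⟨δ, hδ, hδ'⟩ := Metric.uniformContinuousOn_iff.mp
      (isCompact_Icc.uniformContinuousOn_of_continuous hcont) (ε/3) (by linarith)
    obtain ⟨k, hk⟩ := exists_nat_gt ((b - a) / δ)
    have hba : (0:ℝ) < b - a := by linarith
    have hk0 : 0 < (k:ℝ) := lt_of_le_of_lt (div_nonneg hba.le hδ.le) hk
    have hkpos : 0 < k := Nat.cast_pos.mp hk0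
    have hmesh : (b - a) / k < δ := by
      rw [div_lt_iff₀ hk0]
      have := (div_lt_iff₀ hδ).mp hk
      linarith [this]
    have hmesh0 : 0 < (b - a) / k := div_pos hba hk0
    set p : ℕ → ℝ := fun i => a + i * ((b - a) / k) with hp
    have hpmem : ∀ i, i ≤ k → p i ∈ Icc a b := by
      intro i hi
      constructor
      · simp only [hp]
        nlinarith [Nat.cast_nonneg (α := ℝ) i, hmesh0.le]
      · simp only [hp]
        have hik : (i:ℝ) ≤ k := by exact_mod_cast hi
        have : (i:ℝ) * ((b - a) / k) ≤ (k:ℝ) * ((b - a) / k) := by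
          apply mul_le_mul_of_nonneg_right hik hmesh0.le
        have hkk : (k:ℝ) * ((b - a) / k) = b - a := by field_simp
        linarith
    have hpmono : ∀ i j : ℕ, i ≤ j → p i ≤ p j := by
      intro i j hij
      simp only [hp]
      have : (i:ℝ) ≤ j := by exact_mod_cast hij
      nlinarith [hmesh0.le]
    have hev : ∀ᶠ n in atTop, ∀ i ∈ Finset.range (k+1),
        dist (f n (p i)) (g (p i)) < ε/3 := by
      rw [eventually_all_finset]
      intro i hi
      have hik : i ≤ k := Nat.lt_succ_iff.mp (Finset.mem_range.mp hi)
      have h := hptw (p i) (hpmem i hik)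
      filter_upwards [h (Metric.ball_mem_nhds _ (show (0:ℝ) < ε/3 by linarith))] with n hn
      exact Metric.mem_ball.mp hn
    filter_upwards [hev] with n hn x hx
    set v : ℝ := (x - a) * k / (b - a) with hv
    have hv0 : 0 ≤ v := div_nonneg (mul_nonneg (by linarith [hx.1]) hk0.le) hba.le
    have hvk : v ≤ k := by
      rw [hv, div_le_iff₀ hba]
      nlinarith [hx.2]
    set j := ⌊v⌋₊ with hjdef
    have hj1 : (j:ℝ) ≤ v := Nat.floor_le hv0
    have hj2 : v < j + 1 := Nat.lt_floor_add_one v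
    have hjk : j ≤ k := by exact_mod_cast hj1.trans hvk
    set i := min j (k-1) with hidef
    have hik1 : i + 1 ≤ k := by omega
    have hveq : v * ((b - a) / k) = x - a := by
      rw [hv]; field_simp
    have hpix : p i ≤ x := by
      have hij : (i:ℝ) ≤ j := by exact_mod_cast (min_le_left j (k-1))
      have : (i:ℝ) * ((b - a) / k) ≤ v * ((b - a) / k) :=
        mul_le_mul_of_nonneg_right (hij.trans hj1) hmesh0.le
      simp only [hp]
      linarith [hveq ▸ this]
    have hxpi1 : x ≤ p (i+1) := by
      rcases le_or_gt j (k-1) with hc | hc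
      · have hi : i = j := min_eq_left hc
        have : v * ((b - a) / k) < ((j:ℝ) + 1) * ((b - a) / k) :=
          mul_lt_mul_of_pos_right hj2 hmesh0
        rw [hveq] at this
        simp only [hp, hi]
        push_cast
        linarith
      · have hi : i = k - 1 := min_eq_right (le_of_lt hc)
        have hik : i + 1 = k := by omega
        have hpk : p (i+1) = b := by
          simp only [hp, hik]; field_simp; ring
        rw [hpk]; exact hx.2
    have hpimem : p i ∈ Icc a b := hpmem i (by omega)
    have hpi1mem : p (i+1) ∈ Icc a b := hpmem (i+1) hik1
    have h1 : f n x ≤ f n (p i) := hmono n hpimem hx hpix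
    have h2 : f n (p (i+1)) ≤ f n x := hmono n hx hpi1mem hxpi1
    have hni : dist (f n (p i)) (g (p i)) < ε/3 :=
      hn i (Finset.mem_range.mpr (by omega))
    have hni1 : dist (f n (p (i+1))) (g (p (i+1))) < ε/3 :=
      hn (i+1) (Finset.mem_range.mpr (by omega))
    have hlen : p (i+1) - p i = (b - a) / k := by
      simp only [hp]; push_cast; ring
    clear_value v j i p
    have hd1 : dist x (p i) < δ := by
      rw [Real.dist_eq, abs_of_nonneg (by linarith)]
      linarith
    have hd2 : dist x (p (i+1)) < δ := by
      rw [Real.dist_eq, abs_of_nonpos (by linarith)]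
      linarith
    have hgi : dist (g x) (g (p i)) < ε/3 := hδ' x hx (p i) hpimem hd1
    have hgi1 : dist (g x) (g (p (i+1))) < ε/3 := hδ' x hx (p (i+1)) hpi1mem hd2
    rw [Real.dist_eq, abs_sub_lt_iff] at hni hni1 hgi hgi1 ⊢
    constructor
    · linarith [h2, hni1.2, hgi1.1]
    · linarith [h1, hni.1, hgi.2]
end
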